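/- arXiv:2402.08058 — 11 statements merged into one kernel-verified Lean document; each statement's English description precedes it below -/
import Mathlib

section
/- Let X be a Priestley space. The Vietoris hyperspace V(X) of nonempty closed subsets, ordered by reverse inclusion (C ⪯ D iff D ⊆ C), satisfies the Priestley separation axiom: whenever C ⪯̸ D, there is a clopen upset of V(X) containing C but not D. -/
open Set

/-- A Priestley space: compact, and satisfying the Priestley separation axiom. -/
def IsPriestley (X : Type*) [TopologicalSpace X] [Preorder X] : Prop :=
  CompactSpace X ∧
    ∀ x y : X, ¬x ≤ y → ∃ U : Set X, IsClopen U ∧ IsUpperSet U ∧ x ∈ U ∧ y ∉ U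

/-- The Vietoris hyperspace: nonempty closed subsets of `X`. -/
def VSpace (X : Type*) [TopologicalSpace X] : Type _ :=
  { C : Set X // C.Nonempty ∧ IsClosed C }

/-- The hit-and-miss (Vietoris) topology, with subbasis `[U]` and `⟨V⟩` for `U, V` clopen. -/
instance {X : Type*} [TopologicalSpace X] : TopologicalSpace (VSpace X) :=
  TopologicalSpace.generateFrom
    ({ S | ∃ U : Set X, IsClopen U ∧ S = { C : VSpace X | C.1 ⊆ U } } ∪
      { S | ∃ V : Set X, IsClopen V ∧ S = { C : VSpace X | (C.1 ∩ V).Nonempty } })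

/-- The order on `V(X)`: `C ⪯ D` iff `D ⊆ C` (reverse inclusion). -/
instance {X : Type*} [TopologicalSpace X] : PartialOrder (VSpace X) where
  le C D := D.1 ⊆ C.1
  le_refl C := subset_rfl
  le_trans a b c h1 h2 := Set.Subset.trans h2 h1
  le_antisymm a b h1 h2 := Subtype.ext (subset_antisymm h2 h1)

/-- The Vietoris hyperspace of a Priestley space satisfies the Priestley separation axiom:
whenever `C ⪯̸ D`, there is a clopen upset of `V(X)` containing `C` but not `D`. -/
theorem vietoris_priestley_separation {X : Type*} [TopologicalSpace X] [PartialOrder X]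
    (hX : IsPriestley X) :
    ∀ C D : VSpace X, ¬C ≤ D →
      ∃ Z : Set (VSpace X), IsClopen Z ∧ IsUpperSet Z ∧ C ∈ Z ∧ D ∉ Z := by

  intro C D hCD
  -- `¬ C ≤ D` means `¬ D.1 ⊆ C.1`, so get a witness `x ∈ D.1 \ C.1`.
  have hnsub : ¬ D.1 ⊆ C.1 := hCD
  obtain ⟨x, hxD, hxC⟩ := not_subset.mp hnsub
  haveI : CompactSpace X := hX.1
  -- For each `y ∈ C.1`, find a clopen set containing `y` but not `x`.
  have key : ∀ y ∈ C.1, ∃ W : Set X, IsClopen W ∧ y ∈ W ∧ x ∉ W := by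
    intro y hy
    have hne : y ≠ x := fun h => hxC (h ▸ hy)
    by_cases hle : y ≤ x
    · have hnle : ¬ x ≤ y := fun h => hne (le_antisymm hle h)
      obtain ⟨U, hU, _, hxU, hyU⟩ := hX.2 x y hnle
      exact ⟨Uᶜ, hU.compl, hyU, fun h => h hxU⟩
    · obtain ⟨U, hU, _, hyU, hxU⟩ := hX.2 y x hle
      exact ⟨U, hU, hyU, hxU⟩
  choose W hWclopen hWmem hWx using key
  -- `C.1` is compact; extract a finite subcover.
  have hCcomp : IsCompact C.1 := C.2.2.isCompact
  obtain ⟨t, hcover⟩ := hCcomp.elim_nhds_subcover' (fun y hy => W y hy)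
    (fun y hy => (hWclopen y hy).2.mem_nhds (hWmem y hy))
  set U : Set X := ⋃ y ∈ t, W y.1 y.2 with hUdef
  have hUclopen : IsClopen U := by
    apply Set.Finite.isClopen_biUnion t.finite_toSet
    intro y _
    exact hWclopen y.1 y.2
  have hCU : C.1 ⊆ U := hcover
  have hxU : x ∉ U := by
    intro hx
    simp only [hUdef, Set.mem_iUnion] at hx
    obtain ⟨y, _, hy⟩ := hx
    exact hWx y.1 y.2 hy
  refine ⟨{ E : VSpace X | E.1 ⊆ U }, ⟨?_, ?_⟩, ?_, hCU, fun h => hxU (h hxD)⟩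
  · -- closed: the complement is the subbasic open `⟨Uᶜ⟩`.
    have : { E : VSpace X | E.1 ⊆ U }ᶜ = { E : VSpace X | (E.1 ∩ Uᶜ).Nonempty } := by
      ext E
      simp [Set.not_subset, Set.inter_nonempty_iff_exists_left]
    rw [← isOpen_compl_iff, this]
    exact TopologicalSpace.GenerateOpen.basic _ (Or.inr ⟨Uᶜ, hUclopen.compl, rfl⟩)
  · exact TopologicalSpace.GenerateOpen.basic _ (Or.inl ⟨U, hUclopen, rfl⟩)
  · intro E F hEF hE
    exact fun a ha => hE (hEF ha)
end

section
/- Let X be a Priestley space and V(X) its Vietoris hyperspace ordered by reverse inclusion. Then V(X) is an Esakia space: for every clopen Z ⊆ V(X), the downward closure ↓Z is clopen. -/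
open Set

namespace VietorisEsakiaAux

open TopologicalSpace Filter Topology

variable {X : Type*} [TopologicalSpace X]

/-- The "miss" subbasic set `[U]`. -/
def vbox (U : Set X) : Set (VSpace X) := { C : VSpace X | C.1 ⊆ U }

/-- The "hit" subbasic set `⟨V⟩`. -/
def vdia (V : Set X) : Set (VSpace X) := { C : VSpace X | (C.1 ∩ V).Nonempty }

/-- The subbasis of the Vietoris topology. -/
def vsub (X : Type*) [TopologicalSpace X] : Set (Set (VSpace X)) :=
  { S | ∃ U : Set X, IsClopen U ∧ S = { C : VSpace X | C.1 ⊆ U } } ∪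
    { S | ∃ V : Set X, IsClopen V ∧ S = { C : VSpace X | (C.1 ∩ V).Nonempty } }

lemma topology_eq :
    (inferInstance : TopologicalSpace (VSpace X)) = generateFrom (vsub X) := rfl

lemma le_iff (C D : VSpace X) : C ≤ D ↔ D.1 ⊆ C.1 := Iff.rfl

lemma compl_vbox (U : Set X) : (vbox U)ᶜ = vdia Uᶜ := by
  ext C
  simp only [vbox, vdia, mem_compl_iff, mem_setOf_eq, Set.not_subset]
  constructor
  · rintro ⟨a, ha, haU⟩; exact ⟨a, ha, haU⟩
  · rintro ⟨a, ha, haU⟩; exact ⟨a, ha, haU⟩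

lemma compl_vdia (V : Set X) : (vdia V)ᶜ = vbox Vᶜ := by
  ext C
  simp only [vdia, vbox, mem_compl_iff, mem_setOf_eq, Set.not_nonempty_iff_eq_empty]
  constructor
  · intro h x hx hxV
    exact (Set.eq_empty_iff_forall_notMem.1 h x) ⟨hx, hxV⟩
  · intro h
    exact Set.eq_empty_iff_forall_notMem.2 fun x hx => h hx.1 hx.2

lemma isOpen_vbox {U : Set X} (hU : IsClopen U) : IsOpen (vbox U) :=
  isOpen_generateFrom_of_mem (Or.inl ⟨U, hU, rfl⟩)

lemma isOpen_vdia {V : Set X} (hV : IsClopen V) : IsOpen (vdia V) :=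
  isOpen_generateFrom_of_mem (Or.inr ⟨V, hV, rfl⟩)

lemma isClosed_vbox {U : Set X} (hU : IsClopen U) : IsClosed (vbox U) := by
  rw [← isOpen_compl_iff, compl_vbox]
  exact isOpen_vdia hU.compl

lemma isClosed_vdia {V : Set X} (hV : IsClopen V) : IsClosed (vdia V) := by
  rw [← isOpen_compl_iff, compl_vdia]
  exact isOpen_vbox hV.compl

lemma isClopen_vbox {U : Set X} (hU : IsClopen U) : IsClopen (vbox U) :=
  ⟨isClosed_vbox hU, isOpen_vbox hU⟩

lemma isClopen_vdia {V : Set X} (hV : IsClopen V) : IsClopen (vdia V) :=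
  ⟨isClosed_vdia hV, isOpen_vdia hV⟩

section Priestley

variable [PartialOrder X]

/-- Clopen sets separate points in a Priestley space. -/
lemma sep (hX : IsPriestley X) (x y : X) (hxy : x ≠ y) :
    ∃ K : Set X, IsClopen K ∧ x ∈ K ∧ y ∉ K := by
  by_cases h : x ≤ y
  · have h' : ¬y ≤ x := fun h'' => hxy (le_antisymm h h'')
    obtain ⟨U, hU, -, hyU, hxU⟩ := hX.2 y x h'
    exact ⟨Uᶜ, hU.compl, hxU, fun hy => hy hyU⟩
  · obtain ⟨U, hU, -, hxU, hyU⟩ := hX.2 x y h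
    exact ⟨U, hU, hxU, hyU⟩

/-- Clopen sets form a basis of a Priestley space. -/
lemma clopen_basis (hX : IsPriestley X) {O : Set X} (hO : IsOpen O) {x : X} (hx : x ∈ O) :
    ∃ K : Set X, IsClopen K ∧ x ∈ K ∧ K ⊆ O := by
  haveI := hX.1
  have hcpt : IsCompact Oᶜ := (hO.isClosed_compl).isCompact
  have hch : ∀ y : ↥(Oᶜ : Set X), ∃ K : Set X, IsClopen K ∧ x ∈ K ∧ (y : X) ∉ K := by
    intro y
    exact sep hX x y (fun h => y.2 (h ▸ hx))
  choose K hK hxK hyK using hch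
  have hcover : Oᶜ ⊆ ⋃ y : ↥(Oᶜ : Set X), (K y)ᶜ := by
    intro y hy
    exact mem_iUnion.2 ⟨⟨y, hy⟩, hyK ⟨y, hy⟩⟩
  obtain ⟨t, ht⟩ := hcpt.elim_finite_subcover (fun y : ↥(Oᶜ : Set X) => (K y)ᶜ)
    (fun y => (hK y).compl.isOpen) hcover
  refine ⟨⋂ y ∈ t, K y, isClopen_biInter_finset fun y _ => hK y, mem_iInter₂.2 fun y _ => hxK y, ?_⟩
  intro z hz
  by_contra hzO
  obtain ⟨y, hyt, hzy⟩ := mem_iUnion₂.1 (ht hzO)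
  exact hzy (mem_iInter₂.1 hz y hyt)

/-- Every closed set is the intersection of its clopen supersets. -/
lemma exists_clopen_superset (hX : IsPriestley X) {C : Set X} (hC : IsClosed C) {x : X} (hx : x ∉ C) :
    ∃ K : Set X, IsClopen K ∧ C ⊆ K ∧ x ∉ K := by
  obtain ⟨K, hK, hxK, hKO⟩ := clopen_basis hX hC.isOpen_compl hx
  exact ⟨Kᶜ, hK.compl, fun c hc hcK => (hKO hcK) hc, fun h => h hxK⟩

/-- The Vietoris hyperspace of a compact zero-dimensional space is compact. -/
lemma compactSpace_V (hX : IsPriestley X) : CompactSpace (VSpace X) := by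
  haveI := hX.1
  refine ⟨isCompact_iff_ultrafilter_le_nhds.2 fun F _ => ?_⟩
  -- candidate limit
  set Cs : Set X := {x : X | ∀ K : Set X, IsClopen K → x ∈ K → vdia K ∈ F} with hCs
  -- key claim
  have key : ∀ K : Set X, IsClopen K → vdia K ∈ F → (Cs ∩ K).Nonempty := by
    intro K hK hKF
    by_contra hne
    rw [Set.not_nonempty_iff_eq_empty] at hne
    have hch : ∀ y : K, ∃ L : Set X, IsClopen L ∧ (y : X) ∈ L ∧ vdia L ∉ F := by
      intro y
      have : (y : X) ∉ Cs := fun hy => (Set.eq_empty_iff_forall_notMem.1 hne y ⟨hy, y.2⟩)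
      simp only [hCs, mem_setOf_eq, not_forall] at this
      obtain ⟨L, hL, hyL, hLF⟩ := this
      exact ⟨L, hL, hyL, hLF⟩
    choose L hL hyL hLF using hch
    have hcover : K ⊆ ⋃ y : K, L y := fun y hy => mem_iUnion.2 ⟨⟨y, hy⟩, hyL ⟨y, hy⟩⟩
    obtain ⟨t, ht⟩ := (hK.isClosed.isCompact).elim_finite_subcover
      (fun y : K => L y) (fun y => (hL y).isOpen) hcover
    have hsub : vdia K ⊆ ⋃ y ∈ (t : Set K), vdia (L y) := by
      rintro D ⟨d, hdD, hdK⟩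
      obtain ⟨y, hyt, hdy⟩ := mem_iUnion₂.1 (ht hdK)
      exact mem_iUnion₂.2 ⟨y, hyt, d, hdD, hdy⟩
    have : (⋃ y ∈ (t : Set K), vdia (L y)) ∈ F := F.toFilter.mem_of_superset hKF hsub
    obtain ⟨y, -, hy⟩ := (Ultrafilter.finite_biUnion_mem_iff t.finite_toSet).1 this
    exact hLF y hy
  -- the limit is nonempty
  have hne : Cs.Nonempty := by
    have huniv : vdia (univ : Set X) ∈ F := by
      have : vdia (univ : Set X) = univ := by
        ext C
        simp only [vdia, Set.inter_univ, mem_setOf_eq, mem_univ, iff_true]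
        exact C.2.1
      rw [this]; exact Filter.univ_mem
    obtain ⟨x, hx, -⟩ := key univ isClopen_univ huniv
    exact ⟨x, hx⟩
  -- the limit is closed
  have hclosed : IsClosed Cs := by
    rw [← isOpen_compl_iff, isOpen_iff_forall_mem_open]
    intro x hx
    simp only [mem_compl_iff, hCs, mem_setOf_eq, not_forall] at hx
    obtain ⟨K, hK, hxK, hKF⟩ := hx
    refine ⟨K, fun y hy hyC => hKF (hyC K hK hy), hK.isOpen, hxK⟩
  refine ⟨⟨Cs, hne, hclosed⟩, mem_univ _, ?_⟩
  -- convergence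
  suffices h : (↑F : Filter (VSpace X)) ≤
      @nhds (VSpace X) (generateFrom (vsub X)) ⟨Cs, hne, hclosed⟩ by exact h
  refine le_trans ?_ nhds_generateFrom.ge
  refine le_iInf fun s => le_iInf fun hs => ?_
  rw [Filter.le_principal_iff]
  obtain ⟨hmem, hsub⟩ := hs
  rcases hsub with ⟨U, hU, rfl⟩ | ⟨V, hV, rfl⟩
  · -- box case
    have hCU : Cs ⊆ U := hmem
    by_contra hF
    have : vdia Uᶜ ∈ F := by
      rw [← compl_vbox U] at *
      exact (Ultrafilter.compl_mem_iff_notMem).2 hF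
    obtain ⟨x, hxC, hxU⟩ := key Uᶜ hU.compl this
    exact hxU (hCU hxC)
  · -- diamond case
    obtain ⟨x, hxC, hxV⟩ := hmem
    exact hxC V hV hxV

end Priestley

lemma mem_lowerClosure' {Z : Set (VSpace X)} {C : VSpace X} :
    C ∈ (↑(lowerClosure Z) : Set (VSpace X)) ↔ ∃ D ∈ Z, D.1 ⊆ C.1 := by
  simp only [SetLike.mem_coe, mem_lowerClosure]
  rfl

/-- Down closure of a basic open set. -/
lemma lower_basic {U : Set X} (hU : IsClopen U) (T : Set (Set X)) :
    (↑(lowerClosure (vbox U ∩ ⋂ V ∈ T, vdia V)) : Set (VSpace X)) =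
      vdia U ∩ ⋂ V ∈ T, vdia (U ∩ V) := by
  ext C
  rw [mem_lowerClosure']
  constructor
  · rintro ⟨D, hD, hDC⟩
    obtain ⟨hDU, hDT⟩ := hD
    constructor
    · obtain ⟨d, hd⟩ := D.2.1
      exact ⟨d, hDC hd, hDU hd⟩
    · refine mem_iInter₂.2 fun V hV => ?_
      obtain ⟨d, hdD, hdV⟩ := mem_iInter₂.1 hDT V hV
      exact ⟨d, hDC hdD, hDU hdD, hdV⟩
  · rintro ⟨hCU, hCT⟩
    refine ⟨⟨C.1 ∩ U, hCU, C.2.2.inter hU.isClosed⟩, ⟨fun d hd => hd.2, ?_⟩, fun d hd => hd.1⟩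
    refine mem_iInter₂.2 fun V hV => ?_
    obtain ⟨d, hdC, hdU, hdV⟩ := mem_iInter₂.1 hCT V hV
    exact ⟨d, ⟨hdC, hdU⟩, hdV⟩

/-- Every finite intersection of subbasic sets has the normal form `[U] ∩ ⋂ ⟨V⟩`. -/
lemma sInter_normal_form {f : Set (Set (VSpace X))} (hf : f.Finite) (hsub : f ⊆ vsub X) :
    ∃ (U : Set X) (T : Set (Set X)), IsClopen U ∧ T.Finite ∧ (∀ V ∈ T, IsClopen V) ∧
      ⋂₀ f = vbox U ∩ ⋂ V ∈ T, vdia V := by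
  revert hsub
  refine Set.Finite.induction_on f hf (fun _ => ?_) ?_
  · refine ⟨univ, ∅, isClopen_univ, finite_empty, fun V hV => absurd hV (notMem_empty V), ?_⟩
    simp [vbox]
  · intro s f hs hffin IH hsub
    obtain ⟨U, T, hU, hTfin, hT, hform⟩ := IH (fun t ht => hsub (mem_insert_of_mem s ht))
    have hsmem : s ∈ vsub X := hsub (mem_insert s f)
    rw [sInter_insert, hform]
    rcases hsmem with ⟨U', hU', rfl⟩ | ⟨V', hV', rfl⟩
    · refine ⟨U' ∩ U, T, hU'.inter hU, hTfin, hT, ?_⟩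
      have : ({ C : VSpace X | C.1 ⊆ U' } : Set (VSpace X)) = vbox U' := rfl
      rw [this]
      have hbox : vbox (U' ∩ U) = vbox U' ∩ vbox U := by
        ext C; simp [vbox, Set.subset_inter_iff]
      rw [hbox, Set.inter_assoc]
    · refine ⟨U, insert V' T, hU, hTfin.insert V',
        fun V hV => hV.elim (fun h => h ▸ hV') (hT V), ?_⟩
      have : ({ C : VSpace X | (C.1 ∩ V').Nonempty } : Set (VSpace X)) = vdia V' := rfl
      rw [this, biInter_insert]
      ext C
      simp only [mem_inter_iff, mem_iInter]
      tauto

lemma lowerClosure_iUnion {ι : Sort*} (f : ι → Set (VSpace X)) :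
    (↑(lowerClosure (⋃ i, f i)) : Set (VSpace X)) = ⋃ i, ↑(lowerClosure (f i)) := by
  ext C
  rw [mem_lowerClosure', mem_iUnion]
  constructor
  · rintro ⟨D, hD, hDC⟩
    obtain ⟨i, hi⟩ := mem_iUnion.1 hD
    exact ⟨i, mem_lowerClosure'.2 ⟨D, hi, hDC⟩⟩
  · rintro ⟨i, hi⟩
    obtain ⟨D, hD, hDC⟩ := mem_lowerClosure'.1 hi
    exact ⟨D, mem_iUnion.2 ⟨i, hD⟩, hDC⟩

/-- Down closure of an open set is open. -/
lemma isOpen_lower {Z : Set (VSpace X)} (hZ : IsOpen Z) :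
    IsOpen (↑(lowerClosure Z) : Set (VSpace X)) := by
  have hB := isTopologicalBasis_of_subbasis (topology_eq (X := X))
  obtain ⟨S, hS, rfl⟩ := hB.open_eq_sUnion hZ
  rw [sUnion_eq_iUnion, lowerClosure_iUnion]
  refine isOpen_iUnion fun s => ?_
  obtain ⟨g, ⟨hgfin, hgsub⟩, hg⟩ := hS s.2
  obtain ⟨U, T, hU, hTfin, hT, hform⟩ := sInter_normal_form hgfin hgsub
  rw [show (s : Set (VSpace X)) = vbox U ∩ ⋂ V ∈ T, vdia V from hg ▸ hform,
    lower_basic hU T]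
  exact (isOpen_vdia hU).inter
    (hTfin.isOpen_biInter fun V hV => isOpen_vdia (hU.inter (hT V hV)))

/-- Down closure of a clopen set is closed (uses compactness of `V(X)`). -/
lemma isClosed_lower [PartialOrder X] (hX : IsPriestley X) {Z : Set (VSpace X)}
    (hZ : IsClopen Z) : IsClosed (↑(lowerClosure Z) : Set (VSpace X)) := by
  haveI := compactSpace_V hX
  rw [← isOpen_compl_iff, isOpen_iff_forall_mem_open]
  intro C hC
  rw [mem_compl_iff, mem_lowerClosure'] at hC
  push_neg at hC
  -- the family of clopen supersets of C
  set ι := {U : Set X // IsClopen U ∧ C.1 ⊆ U} with hι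
  have hclosed : ∀ i : ι, IsClosed (vbox i.1 ∩ Z) :=
    fun i => (isClosed_vbox i.2.1).inter hZ.1
  have hempty : (univ : Set (VSpace X)) ∩ ⋂ i : ι, (vbox i.1 ∩ Z) = ∅ := by
    rw [Set.eq_empty_iff_forall_notMem]
    rintro D ⟨-, hD⟩
    have hDZ : D ∈ Z := (mem_iInter.1 hD ⟨univ, isClopen_univ, subset_univ _⟩).2
    have hDC : D.1 ⊆ C.1 := by
      intro x hx
      by_contra hxC
      obtain ⟨K, hK, hCK, hxK⟩ := exists_clopen_superset hX C.2.2 hxC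
      exact hxK ((mem_iInter.1 hD ⟨K, hK, hCK⟩).1 hx)
    exact hC D hDZ hDC
  obtain ⟨u, hu⟩ := isCompact_univ.elim_finite_subfamily_closed
    (fun i : ι => vbox i.1 ∩ Z) hclosed hempty
  refine ⟨vbox (⋂ i ∈ u, (i : ι).1), ?_, isOpen_vbox (isClopen_biInter_finset fun i _ => i.2.1),
    fun x hx => mem_iInter₂.2 fun i _ => i.2.2 hx⟩
  intro C' hC'
  rw [mem_compl_iff, mem_lowerClosure']
  rintro ⟨D, hDZ, hDC'⟩
  have : D ∈ (univ : Set (VSpace X)) ∩ ⋂ i ∈ u, (vbox i.1 ∩ Z) := by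
    refine ⟨mem_univ _, mem_iInter₂.2 fun i hi => ⟨?_, hDZ⟩⟩
    exact fun x hx => mem_iInter₂.1 (hC' (hDC' hx)) i hi
  rw [hu] at this
  exact this

end VietorisEsakiaAux

/-- The Vietoris hyperspace of a Priestley space is an Esakia space: the downward
closure of every clopen subset of `V(X)` is clopen. -/
theorem vietoris_isEsakia {X : Type*} [TopologicalSpace X] [PartialOrder X]
    (hX : IsPriestley X) :
    ∀ Z : Set (VSpace X), IsClopen Z → IsClopen (↑(lowerClosure Z) : Set (VSpace X)) := by
  intro Z hZ
  exact ⟨VietorisEsakiaAux.isClosed_lower hX hZ, VietorisEsakiaAux.isOpen_lower hZ.2⟩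
end

section
/- Let X be a Priestley space. The set V_r(X) of rooted nonempty closed subsets of X is a closed subset of the Vietoris hyperspace V(X), and hence V_r(X) with the induced order and topology is a Priestley space. -/
open Set

/-- A nonempty closed subset is rooted if it has a least element (a root). -/
def Rooted {X : Type*} [TopologicalSpace X] [Preorder X] (C : VSpace X) : Prop :=
  ∃ r ∈ C.1, C.1 ⊆ Set.Ici r

/- Auxiliary lemmas -/

lemma miss_open {X : Type*} [TopologicalSpace X] {U : Set X} (hU : IsClopen U) :
    IsOpen { C : VSpace X | C.1 ⊆ U } :=
  TopologicalSpace.isOpen_generateFrom_of_mem (Or.inl ⟨U, hU, rfl⟩)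

lemma hit_open {X : Type*} [TopologicalSpace X] {V : Set X} (hV : IsClopen V) :
    IsOpen { C : VSpace X | (C.1 ∩ V).Nonempty } :=
  TopologicalSpace.isOpen_generateFrom_of_mem (Or.inr ⟨V, hV, rfl⟩)

lemma miss_compl {X : Type*} [TopologicalSpace X] (U : Set X) :
    { C : VSpace X | C.1 ⊆ U }ᶜ = { C : VSpace X | (C.1 ∩ Uᶜ).Nonempty } := by
  ext C
  simp only [mem_compl_iff, mem_setOf_eq, Set.not_subset]
  constructor
  · rintro ⟨a, ha, hna⟩; exact ⟨a, ha, hna⟩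
  · rintro ⟨a, ha, hna⟩; exact ⟨a, ha, hna⟩

lemma miss_clopen {X : Type*} [TopologicalSpace X] {U : Set X} (hU : IsClopen U) :
    IsClopen { C : VSpace X | C.1 ⊆ U } := by
  refine ⟨?_, miss_open hU⟩
  rw [← isOpen_compl_iff, miss_compl]
  exact hit_open hU.compl

lemma vnhds {X : Type*} [TopologicalSpace X] {C : VSpace X} {F : Filter (VSpace X)}
    (h1 : ∀ U : Set X, IsClopen U → C.1 ⊆ U → { E : VSpace X | E.1 ⊆ U } ∈ F)
    (h2 : ∀ V : Set X, IsClopen V → (C.1 ∩ V).Nonempty →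
      { E : VSpace X | (E.1 ∩ V).Nonempty } ∈ F) :
    F ≤ nhds C := by
  rw [TopologicalSpace.nhds_generateFrom]
  refine le_iInf₂ fun s hs => Filter.le_principal_iff.2 ?_
  obtain ⟨hCs, hs⟩ := hs
  rcases hs with ⟨U, hU, rfl⟩ | ⟨V, hV, rfl⟩
  · exact h1 U hU hCs
  · exact h2 V hV hCs

/-- Separation of a compact set from a point outside it by a clopen set. -/
lemma sep_clopen {X : Type*} [TopologicalSpace X] [PartialOrder X] (hX : IsPriestley X)
    {C : Set X} (hC : IsCompact C) {x : X} (hx : x ∉ C) :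
    ∃ U : Set X, IsClopen U ∧ C ⊆ U ∧ x ∉ U := by
  have key : ∀ c ∈ C, ∃ U : Set X, IsClopen U ∧ c ∈ U ∧ x ∉ U := by
    intro c hc
    have hne : c ≠ x := fun h => hx (h ▸ hc)
    by_cases h1 : c ≤ x
    · have h2 : ¬ x ≤ c := fun h => hne (le_antisymm h1 h)
      obtain ⟨V, hV, _, hxV, hcV⟩ := hX.2 x c h2
      exact ⟨Vᶜ, hV.compl, hcV, fun h => h hxV⟩
    · obtain ⟨U, hU, _, hcU, hxU⟩ := hX.2 c x h1
      exact ⟨U, hU, hcU, hxU⟩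
  choose! U hUc hcU hxU using key
  obtain ⟨t, ht, hcov⟩ := hC.elim_nhds_subcover U
    (fun c hc => (hUc c hc).2.mem_nhds (hcU c hc))
  refine ⟨⋃ c ∈ t, U c, isClopen_biUnion_finset (fun c hc => hUc c (ht c hc)), hcov, ?_⟩
  simp only [mem_iUnion, not_exists]
  exact fun c hc => hxU c (ht c hc)

lemma vspace_compactSpace {X : Type*} [TopologicalSpace X] (hcomp : CompactSpace X) :
    CompactSpace (VSpace X) := by
  rw [← isCompact_univ_iff, isCompact_iff_ultrafilter_le_nhds]
  intro F _
  -- the candidate limit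
  set L : Set X := {x | ∀ V : Set X, IsClopen V → x ∈ V →
    { E : VSpace X | (E.1 ∩ V).Nonempty } ∈ F} with hL
  -- misses go into the ultrafilter when hits are not there
  have hmiss : ∀ V : Set X, IsClopen V → { E : VSpace X | (E.1 ∩ V).Nonempty } ∉ F →
      { E : VSpace X | E.1 ⊆ Vᶜ } ∈ F := by
    intro V hV h
    have h2 := (Ultrafilter.compl_mem_iff_notMem (f := F)).2 h
    have heq : { E : VSpace X | (E.1 ∩ V).Nonempty }ᶜ = { E : VSpace X | E.1 ⊆ Vᶜ } := by
      ext E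
      simp only [mem_compl_iff, mem_setOf_eq]
      constructor
      · exact fun hne a ha hav => hne ⟨a, ha, hav⟩
      · rintro hs ⟨a, haE, haV⟩
        exact hs haE haV
    rwa [heq] at h2
  -- L is nonempty
  have hLne : L.Nonempty := by
    by_contra h
    rw [Set.not_nonempty_iff_eq_empty] at h
    have key : ∀ x : X, ∃ V : Set X, IsClopen V ∧ x ∈ V ∧
        { E : VSpace X | (E.1 ∩ V).Nonempty } ∉ F := by
      intro x
      have : x ∉ L := h ▸ Set.notMem_empty x
      simp only [hL, mem_setOf_eq, not_forall] at this
      obtain ⟨V, hV, hxV, hnF⟩ := this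
      exact ⟨V, hV, hxV, hnF⟩
    choose V hV hxV hnF using key
    obtain ⟨t, -, hcov⟩ := isCompact_univ.elim_nhds_subcover V
      (fun x _ => (hV x).2.mem_nhds (hxV x))
    have hmem : (⋂ x ∈ t, { E : VSpace X | E.1 ⊆ (V x)ᶜ }) ∈ F :=
      (Filter.biInter_finset_mem t).2 fun x _ => hmiss (V x) (hV x) (hnF x)
    obtain ⟨E, hE⟩ := Ultrafilter.nonempty_of_mem hmem
    simp only [mem_iInter, mem_setOf_eq] at hE
    obtain ⟨e, he⟩ := E.2.1
    have : e ∈ ⋃ x ∈ t, V x := hcov (mem_univ e)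
    simp only [mem_iUnion] at this
    obtain ⟨x, hxt, hex⟩ := this
    exact hE x hxt he hex
  -- L is closed
  have hLcl : IsClosed L := by
    rw [← isOpen_compl_iff, isOpen_iff_forall_mem_open]
    intro x hx
    simp only [mem_compl_iff, hL, mem_setOf_eq, not_forall] at hx
    obtain ⟨V, hV, hxV, hnF⟩ := hx
    exact ⟨V, fun y hy hyL => hnF (hyL V hV hy), hV.2, hxV⟩
  refine ⟨⟨L, hLne, hLcl⟩, mem_univ _, vnhds ?_ ?_⟩
  · -- misses
    intro U hU hLU
    by_contra h
    have hhit : { E : VSpace X | (E.1 ∩ Uᶜ).Nonempty } ∈ F := by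
      have := (Ultrafilter.compl_mem_iff_notMem (f := F)).2 h
      rwa [miss_compl] at this
    have key : ∀ x ∈ Uᶜ, ∃ V : Set X, IsClopen V ∧ x ∈ V ∧
        { E : VSpace X | (E.1 ∩ V).Nonempty } ∉ F := by
      intro x hxU
      have : x ∉ L := fun hxL => hxU (hLU hxL)
      simp only [hL, mem_setOf_eq, not_forall] at this
      obtain ⟨V, hV, hxV, hnF⟩ := this
      exact ⟨V, hV, hxV, hnF⟩
    choose! V hV hxV hnF using key
    have hUccomp : IsCompact Uᶜ := hU.compl.1.isCompact
    obtain ⟨t, ht, hcov⟩ := hUccomp.elim_nhds_subcover V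
      (fun x hx => (hV x hx).2.mem_nhds (hxV x hx))
    have hmem : ({ E : VSpace X | (E.1 ∩ Uᶜ).Nonempty } ∩
        ⋂ x ∈ t, { E : VSpace X | E.1 ⊆ (V x)ᶜ }) ∈ F :=
      Filter.inter_mem hhit <| (Filter.biInter_finset_mem t).2
        fun x hx => hmiss (V x) (hV x (ht x hx)) (hnF x (ht x hx))
    obtain ⟨E, hE1, hE2⟩ := Ultrafilter.nonempty_of_mem hmem
    simp only [mem_iInter, mem_setOf_eq] at hE2
    obtain ⟨e, heE, heU⟩ := hE1
    have : e ∈ ⋃ x ∈ t, V x := hcov heU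
    simp only [mem_iUnion] at this
    obtain ⟨x, hxt, hex⟩ := this
    exact hE2 x hxt heE hex
  · -- hits
    rintro V hV ⟨x, hxL, hxV⟩
    exact hxL V hV hxV

/-- The set of rooted nonempty closed subsets is closed in `V(X)`, and hence is itself
a Priestley space with the induced order and topology. -/
theorem rooted_closed_and_priestley {X : Type*} [TopologicalSpace X] [PartialOrder X]
    (hX : IsPriestley X) :
    IsClosed { C : VSpace X | Rooted C } ∧ IsPriestley { C : VSpace X // Rooted C } := by
  have hcomp : CompactSpace X := hX.1
  have hclosed : IsClosed { C : VSpace X | Rooted C } := by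
    rw [← isOpen_compl_iff, isOpen_iff_forall_mem_open]
    intro C hC
    simp only [mem_compl_iff, mem_setOf_eq, Rooted] at hC
    push_neg at hC
    -- every point of C fails to be a root, witnessed by clopen upper sets
    have key : ∀ x ∈ C.1, ∃ U : Set X, IsClopen U ∧ IsUpperSet U ∧ x ∈ U ∧
        (C.1 ∩ Uᶜ).Nonempty := by
      intro x hx
      obtain ⟨y, hy, hxy⟩ := Set.not_subset.1 (hC x hx)
      obtain ⟨U, hU, hUup, hxU, hyU⟩ := hX.2 x y hxy
      exact ⟨U, hU, hUup, hxU, ⟨y, hy, hyU⟩⟩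
    choose! U hUc hUup hxU hChit using key
    have hCcomp : IsCompact C.1 := C.2.2.isCompact
    obtain ⟨t, ht, hcov⟩ := hCcomp.elim_nhds_subcover U
      (fun x hx => (hUc x hx).2.mem_nhds (hxU x hx))
    refine ⟨{ E : VSpace X | E.1 ⊆ ⋃ x ∈ t, U x } ∩
      ⋂ x ∈ t, { E : VSpace X | (E.1 ∩ (U x)ᶜ).Nonempty }, ?_, ?_, ?_, ?_⟩
    · -- this open set avoids the rooted sets
      rintro E ⟨hE1, hE2⟩ ⟨r, hrE, hroot⟩
      simp only [mem_iInter, mem_setOf_eq] at hE2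
      have : r ∈ ⋃ x ∈ t, U x := hE1 hrE
      simp only [mem_iUnion] at this
      obtain ⟨x, hxt, hrU⟩ := this
      obtain ⟨z, hzE, hzU⟩ := hE2 x hxt
      exact hzU ((hUup x (ht x hxt)) (hroot hzE) hrU)
    · refine IsOpen.inter (miss_open (isClopen_biUnion_finset fun x hx => hUc x (ht x hx))) ?_
      exact isOpen_biInter_finset fun x hx => hit_open (hUc x (ht x hx)).compl
    · exact hcov
    · simp only [mem_iInter, mem_setOf_eq]
      exact fun x hx => hChit x (ht x hx)
  refine ⟨hclosed, ?_, ?_⟩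
  · -- compactness of the subtype
    have : CompactSpace (VSpace X) := vspace_compactSpace hcomp
    exact isCompact_iff_compactSpace.mp hclosed.isCompact
  · -- Priestley separation for the subtype
    rintro ⟨C, hC⟩ ⟨D, hD⟩ hle
    have hnsub : ¬ D.1 ⊆ C.1 := hle
    obtain ⟨x, hxD, hxC⟩ := Set.not_subset.1 hnsub
    obtain ⟨U, hU, hCU, hxU⟩ := sep_clopen hX C.2.2.isCompact hxC
    refine ⟨Subtype.val ⁻¹' { E : VSpace X | E.1 ⊆ U }, ?_, ?_, hCU, ?_⟩
    · exact (miss_clopen hU).preimage continuous_subtype_val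
    · intro a b hab ha
      have h' : b.1.1 ⊆ a.1.1 := hab
      exact h'.trans ha
    · exact fun h => hxU (h hxD)
end

section
/- Let f : X → Y and g : Y → Z be monotone continuous maps of Priestley spaces, and suppose the relevant relative pseudocomplements exist in the lattices of clopen upsets. Then f⁻¹ preserves all relative pseudocomplements of the form g⁻¹[U] → g⁻¹[V] (U, V clopen upsets of Z) if and only if f satisfies: for all a ∈ X and b ∈ Y, if f(a) ≤ b then there exists a' ≥ a in X with g(f(a')) = g(b). -/
open Set

/-- A clopen upset of an ordered topological space. -/
def IsClopenUpset {α : Type*} [TopologicalSpace α] [Preorder α] (U : Set α) : Prop :=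
  IsClopen U ∧ IsUpperSet U

/-- `C` is the relative pseudocomplement `A → B` in the lattice of clopen upsets:
`C` is a clopen upset, and for every clopen upset `D`, `D ∩ A ⊆ B` iff `D ⊆ C`. -/
def IsRelPseudo {α : Type*} [TopologicalSpace α] [Preorder α] (A B C : Set α) : Prop :=
  IsClopenUpset C ∧ ∀ D : Set α, IsClopenUpset D → (D ∩ A ⊆ B ↔ D ⊆ C)

lemma priestley_isClosed_Ici {α : Type*} [TopologicalSpace α] [Preorder α]
    (hα : IsPriestley α) (a : α) : IsClosed (Ici a) := by
  rw [← isOpen_compl_iff, isOpen_iff_mem_nhds]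
  intro t ht
  obtain ⟨D, hDc, hDu, haD, htD⟩ := hα.2 a t ht
  exact Filter.mem_of_superset (hDc.compl.isOpen.mem_nhds htD)
    (fun s hs hsa => hs (hDu hsa haD))

/-- Pointwise characterization of a relative pseudocomplement in a Priestley space. -/
lemma isRelPseudo_eq_arrow {α : Type*} [TopologicalSpace α] [PartialOrder α]
    (hα : IsPriestley α) {A B C : Set α} (hA : IsClopen A) (hB : IsClopen B)
    (hC : IsRelPseudo A B C) :
    C = {y | ∀ t, y ≤ t → t ∈ A → t ∈ B} := by
  obtain ⟨⟨hCclo, hCup⟩, hmax⟩ := hC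
  apply Set.Subset.antisymm
  · intro y hy t hyt htA
    exact (hmax C ⟨hCclo, hCup⟩).mpr subset_rfl ⟨hCup hyt hy, htA⟩
  · intro y hy
    haveI := hα.1
    have hK : IsCompact (A \ B) := (hA.isClosed.sdiff hB.isOpen).isCompact
    have hsep : ∀ t : {t // t ∈ A \ B}, ¬ y ≤ (t : α) :=
      fun t h => t.2.2 (hy t h t.2.1)
    choose D hD using fun t : {t // t ∈ A \ B} => hα.2 y t (hsep t)
    obtain ⟨s, hs⟩ := hK.elim_finite_subcover (fun t => (D t)ᶜ)
      (fun t => (hD t).1.compl.isOpen)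
      (fun x hx => mem_iUnion.mpr ⟨⟨x, hx⟩, (hD ⟨x, hx⟩).2.2.2⟩)
    have hEcu : IsClopenUpset (⋂ t ∈ s, D t) := by
      refine ⟨isClopen_biInter_finset (fun t _ => (hD t).1), ?_⟩
      exact isUpperSet_iInter₂ (fun t _ => (hD t).2.1)
    have hEA : (⋂ t ∈ s, D t) ∩ A ⊆ B := by
      intro x hx
      by_contra hxB
      obtain ⟨t, ht, hxt⟩ := mem_iUnion₂.mp (hs ⟨hx.2, hxB⟩)
      exact hxt (mem_iInter₂.mp hx.1 t ht)
    exact (hmax _ hEcu).mp hEA (mem_iInter₂.mpr (fun t _ => (hD t).2.2.1))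

/-- If the pointwise arrow set is a clopen upset, it is the relative pseudocomplement. -/
lemma isRelPseudo_of_arrow {α : Type*} [TopologicalSpace α] [Preorder α]
    {A B W : Set α} (hW : IsClopenUpset W)
    (hWeq : W = {y | ∀ t, y ≤ t → t ∈ A → t ∈ B}) :
    IsRelPseudo A B W := by
  refine ⟨hW, fun D hD => ⟨fun h d hd => ?_, fun h x hx => ?_⟩⟩
  · rw [hWeq]
    exact fun t hdt htA => h ⟨hD.2 hdt hd, htA⟩
  · have := h hx.1
    rw [hWeq] at this
    exact this x le_rfl hx.2

/-- `f⁻¹` preserves relative pseudocomplements of the form `g⁻¹[U] → g⁻¹[V]`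
(for `U, V` clopen upsets of `Z`) iff `f` satisfies the order-theoretic
`g`-openness condition (*). -/
theorem gOpen_iff_preserves_relPseudo {X Y Z : Type*}
    [TopologicalSpace X] [PartialOrder X] [TopologicalSpace Y] [PartialOrder Y]
    [TopologicalSpace Z] [PartialOrder Z]
    (hX : IsPriestley X) (hY : IsPriestley Y) (hZ : IsPriestley Z)
    (f : X → Y) (g : Y → Z) (hfc : Continuous f) (hfm : Monotone f)
    (hgc : Continuous g) (hgm : Monotone g)
    (hex : ∀ U V : Set Z, IsClopenUpset U → IsClopenUpset V →
      ∃ C : Set Y, IsRelPseudo (g ⁻¹' U) (g ⁻¹' V) C) :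
    (∀ (U V : Set Z) (C : Set Y), IsClopenUpset U → IsClopenUpset V →
        IsRelPseudo (g ⁻¹' U) (g ⁻¹' V) C →
        IsRelPseudo (f ⁻¹' (g ⁻¹' U)) (f ⁻¹' (g ⁻¹' V)) (f ⁻¹' C)) ↔
      ∀ (a : X) (b : Y), f a ≤ b → ∃ a' : X, a ≤ a' ∧ g (f a') = g b := by
  constructor
  · intro hpres a b hab
    by_contra H
    push_neg at H
    haveI := hX.1
    have hK : IsCompact ((fun x => g (f x)) '' Ici a) :=
      ((priestley_isClosed_Ici hX a).isCompact).image (hgc.comp hfc)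
    set K := (fun x => g (f x)) '' Ici a with hKdef
    have key : ∀ z ∈ K, ∃ P Q : Set Z, IsClopenUpset P ∧ IsClopenUpset Q ∧
        g b ∈ P ∧ g b ∉ Q ∧ z ∈ Q ∪ Pᶜ := by
      rintro z ⟨x, hx, rfl⟩
      by_cases hz : g (f x) ≤ g b
      · have hne : ¬ g b ≤ g (f x) := fun h => H x hx (le_antisymm hz h)
        obtain ⟨P, hPc, hPu, hbP, hzP⟩ := hZ.2 (g b) (g (f x)) hne
        exact ⟨P, ∅, ⟨hPc, hPu⟩, ⟨isClopen_empty, isUpperSet_empty⟩, hbP,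
          notMem_empty _, Or.inr hzP⟩
      · obtain ⟨Q, hQc, hQu, hzQ, hbQ⟩ := hZ.2 (g (f x)) (g b) hz
        exact ⟨univ, Q, ⟨isClopen_univ, isUpperSet_univ⟩, ⟨hQc, hQu⟩,
          mem_univ _, hbQ, Or.inl hzQ⟩
    choose! P Q hP hQ hbP hbQ hcov using key
    obtain ⟨t, ht⟩ := hK.elim_finite_subcover (fun z : K => Q z ∪ (P z)ᶜ)
      (fun z => ((hQ z z.2).1.isOpen).union ((hP z z.2).1.compl.isOpen))
      (fun z hz => mem_iUnion.mpr ⟨⟨z, hz⟩, hcov z hz⟩)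
    set U := ⋂ z ∈ t, P (z : Z) with hUdef
    set V := ⋃ z ∈ t, Q (z : Z) with hVdef
    have hUcu : IsClopenUpset U :=
      ⟨isClopen_biInter_finset (fun z _ => (hP z z.2).1),
       isUpperSet_iInter₂ (fun z _ => (hP z z.2).2)⟩
    have hVcu : IsClopenUpset V :=
      ⟨isClopen_biUnion_finset (fun z _ => (hQ z z.2).1),
       isUpperSet_iUnion₂ (fun z _ => (hQ z z.2).2)⟩
    have hgbU : g b ∈ U := mem_iInter₂.mpr (fun z _ => hbP z z.2)
    have hgbV : g b ∉ V := fun h => by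
      obtain ⟨z, _, hz⟩ := mem_iUnion₂.mp h
      exact hbQ z z.2 hz
    have hKUV : ∀ z ∈ K, z ∈ U → z ∈ V := by
      intro z hz hzU
      obtain ⟨i, hi, hzi⟩ := mem_iUnion₂.mp (ht hz)
      rcases hzi with h | h
      · exact mem_iUnion₂.mpr ⟨i, hi, h⟩
      · exact absurd (mem_iInter₂.mp hzU i hi) h
    obtain ⟨C, hC⟩ := hex U V hUcu hVcu
    have hC' := hpres U V C hUcu hVcu hC
    have hCeq := isRelPseudo_eq_arrow hY (hUcu.1.preimage hgc) (hVcu.1.preimage hgc) hC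
    have hC'eq := isRelPseudo_eq_arrow hX
      ((hUcu.1.preimage hgc).preimage hfc) ((hVcu.1.preimage hgc).preimage hfc) hC'
    have haC : f a ∈ C := by
      have : a ∈ f ⁻¹' C := by
        rw [hC'eq]
        exact fun x' hx' hxU => hKUV _ ⟨x', hx', rfl⟩ hxU
      exact this
    rw [hCeq] at haC
    exact hgbV (haC b hab hgbU)
  · intro hstar U V C hU hV hC
    have hCeq := isRelPseudo_eq_arrow hY (hU.1.preimage hgc) (hV.1.preimage hgc) hC
    have hfCcu : IsClopenUpset (f ⁻¹' C) :=
      ⟨hC.1.1.preimage hfc, fun x x' hxx' hx => hC.1.2 (hfm hxx') hx⟩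
    refine isRelPseudo_of_arrow hfCcu ?_
    ext x
    constructor
    · intro hx x' hxx' hxU
      have hfx : f x ∈ C := hx
      rw [hCeq] at hfx
      obtain ⟨a', ha', hga'⟩ := hstar x' (f x') le_rfl
      have := hfx (f x') (hfm hxx') hxU
      exact this
    · intro hx
      show f x ∈ C
      rw [hCeq]
      intro c hfxc hcU
      obtain ⟨a', ha', hga'⟩ := hstar x c hfxc
      have : g (f a') ∈ U := by rw [hga']; exact hcU
      have hV' := hx a' ha' this
      show g c ∈ V
      rw [← hga']
      exact hV'
end

section
/- Let g : X → Y be as above, with g-indexed relative pseudocomplements existing in X. The root map r_g : V_g(X) → X, sending a rooted closed g-open subset to its root, is continuous, order-preserving, surjective, and g-open. -/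
open Set

/-- A subset `S` of `X` is `g`-open if whenever `s ∈ S` and `s ≤ b`, there is
`s' ∈ S` with `s ≤ s'` and `g s' = g b`. -/
def GOpenSub {X Y : Type*} [Preorder X] (g : X → Y) (S : Set X) : Prop :=
  ∀ s ∈ S, ∀ b : X, s ≤ b → ∃ s' ∈ S, s ≤ s' ∧ g s' = g b

lemma priestley_Ici_closed {X : Type*} [TopologicalSpace X] [Preorder X]
    (hX : IsPriestley X) (x : X) : IsClosed (Set.Ici x) := by
  rw [← isOpen_compl_iff]
  rw [isOpen_iff_forall_mem_open]
  intro y hy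
  obtain ⟨U, hUc, hUu, hxU, hyU⟩ := hX.2 x y hy
  exact ⟨Uᶜ, fun z hz hz' => hz (hUu hz' hxU), hUc.compl.isOpen, hyU⟩

lemma priestley_basis {X : Type*} [TopologicalSpace X] [PartialOrder X]
    (hX : IsPriestley X) {O : Set X} (hO : IsOpen O) {x : X} (hx : x ∈ O) :
    ∃ U D : Set X, IsClopen U ∧ IsUpperSet U ∧ IsClopen D ∧ IsLowerSet D ∧
      x ∈ U ∧ x ∈ D ∧ U ∩ D ⊆ O := by
  classical
  haveI := hX.1
  have hW : ∀ y : (Oᶜ : Set X), ∃ W : Set X,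
      IsClopen W ∧ (IsUpperSet W ∨ IsLowerSet W) ∧ x ∈ W ∧ (y : X) ∉ W := by
    rintro ⟨y, hy⟩
    have hne : ¬ x ≤ y ∨ ¬ y ≤ x := by
      by_contra h
      push_neg at h
      exact hy (le_antisymm h.1 h.2 ▸ hx)
    rcases hne with h | h
    · obtain ⟨U, hUc, hUu, hxU, hyU⟩ := hX.2 x y h
      exact ⟨U, hUc, Or.inl hUu, hxU, hyU⟩
    · obtain ⟨U, hUc, hUu, hyU, hxU⟩ := hX.2 y x h
      exact ⟨Uᶜ, hUc.compl, Or.inr hUu.compl, hxU, fun h' => h' hyU⟩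
  choose W hWc hWud hxW hyW using hW
  have hK : IsCompact (Oᶜ : Set X) := hO.isClosed_compl.isCompact
  obtain ⟨t, ht⟩ := hK.elim_finite_subcover (fun y => (W y)ᶜ)
    (fun y => (hWc y).compl.isOpen)
    (fun y hy => Set.mem_iUnion.2 ⟨⟨y, hy⟩, hyW ⟨y, hy⟩⟩)
  refine ⟨⋂ i ∈ t, (if IsUpperSet (W i) then W i else Set.univ),
          ⋂ i ∈ t, (if IsUpperSet (W i) then Set.univ else W i), ?_, ?_, ?_, ?_, ?_, ?_, ?_⟩
  · refine isClopen_biInter_finset fun i _ => ?_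
    by_cases h : IsUpperSet (W i) <;> simp [h, hWc i, isClopen_univ]
  · refine isUpperSet_iInter₂ fun i _ => ?_
    by_cases h : IsUpperSet (W i) <;> simp [h, isUpperSet_univ]
  · refine isClopen_biInter_finset fun i _ => ?_
    by_cases h : IsUpperSet (W i) <;> simp [h, hWc i, isClopen_univ]
  · refine isLowerSet_iInter₂ fun i _ => ?_
    by_cases h : IsUpperSet (W i)
    · simp [h, isLowerSet_univ]
    · simpa [h] using (hWud i).resolve_left h
  · refine Set.mem_iInter₂.2 fun i _ => ?_
    by_cases h : IsUpperSet (W i) <;> simp [h, hxW i]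
  · refine Set.mem_iInter₂.2 fun i _ => ?_
    by_cases h : IsUpperSet (W i) <;> simp [h, hxW i]
  · intro z hz
    by_contra hzO
    obtain ⟨i, hi⟩ := Set.mem_iUnion.1 (ht hzO)
    simp only [Set.mem_iUnion] at hi
    obtain ⟨hit, hzi⟩ := hi
    apply hzi
    have h1 := Set.mem_iInter₂.1 hz.1 i hit
    have h2 := Set.mem_iInter₂.1 hz.2 i hit
    by_cases h : IsUpperSet (W i)
    · simpa [h] using h1
    · simpa [h] using h2


/-- The root map `r_g : V_g(X) → X` (any map sending each rooted closed `g`-open subset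
to its root) is continuous, order-preserving, surjective and `g`-open. -/
theorem root_map_properties {X Y : Type*}
    [TopologicalSpace X] [PartialOrder X] [TopologicalSpace Y] [PartialOrder Y]
    (hX : IsPriestley X) (hY : IsPriestley Y)
    (g : X → Y) (hgc : Continuous g) (hgm : Monotone g)
    (hex : ∀ U V : Set Y, IsClopenUpset U → IsClopenUpset V →
      ∃ C : Set X, IsRelPseudo (g ⁻¹' U) (g ⁻¹' V) C)
    (r : { C : VSpace X // Rooted C ∧ GOpenSub g C.1 } → X)
    (hr : ∀ C : { C : VSpace X // Rooted C ∧ GOpenSub g C.1 },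
      r C ∈ C.val.val ∧ C.val.val ⊆ Set.Ici (r C)) :
    Continuous r ∧ Monotone r ∧ Function.Surjective r ∧
      ∀ (C : { C : VSpace X // Rooted C ∧ GOpenSub g C.1 }) (b : X),
        r C ≤ b → ∃ C', C ≤ C' ∧ g (r C') = g b := by
  classical
  have hIci : ∀ x : X, IsClosed (Set.Ici x) := priestley_Ici_closed hX
  have hmono : Monotone r := by
    intro C C' hle
    exact (hr C).2 (hle ((hr C').1))
  refine ⟨?_, hmono, ?_, ?_⟩
  · -- continuity
    rw [continuous_def]
    intro O hO
    rw [isOpen_iff_forall_mem_open]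
    intro C hC
    obtain ⟨U, D, hUc, hUu, hDc, hDl, hxU, hxD, hsub⟩ := priestley_basis hX hO hC
    refine ⟨Subtype.val ⁻¹' ({C' : VSpace X | C'.1 ⊆ U} ∩ {C' : VSpace X | (C'.1 ∩ D).Nonempty}),
        ?_, ?_, ?_⟩
    · rintro C' ⟨h1, h2⟩
      apply hsub
      obtain ⟨t, htC, htD⟩ := h2
      exact ⟨h1 ((hr C').1), hDl ((hr C').2 htC) htD⟩
    · apply IsOpen.preimage continuous_subtype_val
      exact IsOpen.inter
        (TopologicalSpace.GenerateOpen.basic _ (Or.inl ⟨U, hUc, rfl⟩))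
        (TopologicalSpace.GenerateOpen.basic _ (Or.inr ⟨D, hDc, rfl⟩))
    · exact ⟨fun z hz => hUu ((hr C).2 hz) hxU, ⟨r C, (hr C).1, hxD⟩⟩
  · -- surjective
    intro x
    have hgo : GOpenSub g (Set.Ici x) := fun s hs b hsb => ⟨b, hs.trans hsb, hsb, rfl⟩
    set C : { C : VSpace X // Rooted C ∧ GOpenSub g C.1 } :=
      ⟨⟨Set.Ici x, ⟨x, le_refl x⟩, hIci x⟩, ⟨x, le_refl x, subset_rfl⟩, hgo⟩
    refine ⟨C, le_antisymm ((hr C).2 (le_refl x : x ∈ Set.Ici x)) ((hr C).1)⟩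
  · -- g-open
    intro C b hb
    obtain ⟨s', hs'C, hrs', hgs'⟩ := C.2.2 (r C) (hr C).1 b hb
    have hclosed : IsClosed (C.val.1 ∩ Set.Ici s') := C.val.2.2.inter (hIci s')
    have hgo : GOpenSub g (C.val.1 ∩ Set.Ici s') := by
      rintro t ⟨htC, hts'⟩ b' htb'
      obtain ⟨t', ht'C, htt', hgt'⟩ := C.2.2 t htC b' htb'
      exact ⟨t', ⟨ht'C, hts'.trans htt'⟩, htt', hgt'⟩
    set C' : { C : VSpace X // Rooted C ∧ GOpenSub g C.1 } :=
      ⟨⟨C.val.1 ∩ Set.Ici s', ⟨s', hs'C, le_refl s'⟩, hclosed⟩,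
        ⟨s', ⟨hs'C, le_refl s'⟩, Set.inter_subset_right⟩, hgo⟩
    have hle : C ≤ C' := Set.inter_subset_left
    have hrC' : r C' = s' :=
      le_antisymm ((hr C').2 (⟨hs'C, le_refl s'⟩ : s' ∈ C'.val.1)) ((hr C').1).2
    exact ⟨C', hle, hrC' ▸ hgs'⟩
end

section
/- Let g : X → Y be monotone and continuous between Priestley spaces, Z an Esakia space, and h : Z → X a g-open monotone continuous map. Then the assignment h'(a) = h[↑a] defines the unique r_g-open monotone continuous map h' : Z → V_g(X) with r_g ∘ h' = h. -/
open Set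

/-- An Esakia space: a Priestley space in which the downward closure of every clopen
set is clopen. -/
def IsEsakia (X : Type*) [TopologicalSpace X] [Preorder X] : Prop :=
  IsPriestley X ∧ ∀ U : Set X, IsClopen U → IsClopen (↑(lowerClosure U) : Set X)


theorem priestley_t2 {X : Type*} [TopologicalSpace X] [PartialOrder X]
    (hX : IsPriestley X) : T2Space X := by
  constructor
  intro x y hxy
  rcases (not_and_or.mp fun h => hxy (le_antisymm h.1 h.2)) with hxy' | hxy'
  · obtain ⟨U, hU, _, hxU, hyU⟩ := hX.2 x y hxy'
    exact ⟨U, Uᶜ, hU.isOpen, hU.compl.isOpen, hxU, hyU, disjoint_compl_right⟩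
  · obtain ⟨U, hU, _, hyU, hxU⟩ := hX.2 y x hxy'
    exact ⟨Uᶜ, U, hU.compl.isOpen, hU.isOpen, hxU, hyU, disjoint_compl_left⟩

theorem priestley_closed_Ici {X : Type*} [TopologicalSpace X] [PartialOrder X]
    (hX : IsPriestley X) (x : X) : IsClosed (Set.Ici x) := by
  rw [← isOpen_compl_iff, isOpen_iff_forall_mem_open]
  intro y hy
  obtain ⟨U, hU, hUu, hxU, hyU⟩ := hX.2 x y hy
  exact ⟨Uᶜ, fun z hz hxz => hz (hUu hxz hxU), hU.compl.isOpen, hyU⟩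

/-- Given a `g`-open monotone continuous map `h : Z → X` from an Esakia space `Z`, the
assignment `h'(a) = h[↑a]` defines the unique `r_g`-open monotone continuous map
`h' : Z → V_g(X)` with `r_g ∘ h' = h`. -/
theorem unique_lifting_to_Vg {X Y Z : Type*}
    [TopologicalSpace X] [PartialOrder X] [TopologicalSpace Y] [PartialOrder Y]
    [TopologicalSpace Z] [PartialOrder Z]
    (hX : IsPriestley X) (hY : IsPriestley Y) (hZ : IsEsakia Z)
    (g : X → Y) (hgc : Continuous g) (hgm : Monotone g)
    (h : Z → X) (hhc : Continuous h) (hhm : Monotone h)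
    (hho : ∀ (a : Z) (b : X), h a ≤ b → ∃ a', a ≤ a' ∧ g (h a') = g b)
    (r : { C : VSpace X // Rooted C ∧ GOpenSub g C.1 } → X)
    (hr : ∀ C : { C : VSpace X // Rooted C ∧ GOpenSub g C.1 },
      r C ∈ C.val.val ∧ C.val.val ⊆ Set.Ici (r C)) :
    ∃ h' : Z → { C : VSpace X // Rooted C ∧ GOpenSub g C.1 },
      (∀ a : Z, (h' a).val.val = h '' Set.Ici a) ∧
      Continuous h' ∧ Monotone h' ∧
      (∀ (a : Z) (D : { C : VSpace X // Rooted C ∧ GOpenSub g C.1 }),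
        h' a ≤ D → ∃ a', a ≤ a' ∧ r (h' a') = r D) ∧
      (∀ a : Z, r (h' a) = h a) ∧
      ∀ k : Z → { C : VSpace X // Rooted C ∧ GOpenSub g C.1 },
        Continuous k → Monotone k →
        (∀ (a : Z) (D : { C : VSpace X // Rooted C ∧ GOpenSub g C.1 }),
          k a ≤ D → ∃ a', a ≤ a' ∧ r (k a') = r D) →
        (∀ a : Z, r (k a) = h a) → k = h' := by
  have hXC : CompactSpace X := hX.1
  have hZC : CompactSpace Z := hZ.1.1
  have hXT2 : T2Space X := priestley_t2 hX
  have hIciZ : ∀ a : Z, IsClosed (Set.Ici a) := priestley_closed_Ici hZ.1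
  have hIciX : ∀ x : X, IsClosed (Set.Ici x) := priestley_closed_Ici hX
  have hcl : ∀ a : Z, IsClosed (h '' Set.Ici a) := fun a =>
    (((hIciZ a).isCompact).image hhc).isClosed
  have hne : ∀ a : Z, (h '' Set.Ici a).Nonempty := fun a => ⟨h a, a, le_refl a, rfl⟩
  have hsub : ∀ a : Z, h '' Set.Ici a ⊆ Set.Ici (h a) := by
    rintro a x ⟨b, hb, rfl⟩; exact hhm hb
  have hgo : ∀ a : Z, GOpenSub g (h '' Set.Ici a) := by
    rintro a s ⟨c, hc, rfl⟩ b hb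
    obtain ⟨c', hc', hgc'⟩ := hho c b hb
    exact ⟨h c', ⟨c', le_trans hc hc', rfl⟩, hhm hc', hgc'⟩
  set f : Z → VSpace X := fun a => ⟨h '' Set.Ici a, hne a, hcl a⟩ with hf
  have hrootu : ∀ (C : {C : VSpace X // Rooted C ∧ GOpenSub g C.1}) (x : X),
      x ∈ C.1.1 → C.1.1 ⊆ Set.Ici x → r C = x := by
    intro C x hx hsx
    obtain ⟨h1, h2⟩ := hr C
    exact le_antisymm (h2 hx) (hsx h1)
  set h' : Z → {C : VSpace X // Rooted C ∧ GOpenSub g C.1} :=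
    fun a => ⟨f a, ⟨h a, ⟨a, le_refl a, rfl⟩, hsub a⟩, hgo a⟩ with hh'
  have hval : ∀ a, (h' a).1.1 = h '' Set.Ici a := fun a => rfl
  have hrh : ∀ a : Z, r (h' a) = h a := fun a =>
    hrootu _ _ ⟨a, le_refl a, rfl⟩ (hsub a)
  refine ⟨h', hval, ?_, ?_, ?_, hrh, ?_⟩
  · -- continuity
    refine Continuous.subtype_mk ?_ _
    refine continuous_generateFrom_iff.mpr ?_
    rintro S (⟨U, hU, rfl⟩ | ⟨V, hV, rfl⟩)
    · have key : f ⁻¹' {C : VSpace X | C.1 ⊆ U} = (↑(lowerClosure (h ⁻¹' Uᶜ)))ᶜ := by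
        ext a
        simp only [Set.mem_preimage, Set.mem_setOf_eq, Set.mem_compl_iff,
          SetLike.mem_coe, mem_lowerClosure]
        constructor
        · rintro hs ⟨b, hbU, hab⟩
          exact hbU (hs ⟨b, hab, rfl⟩)
        · rintro hn x ⟨b, hab, rfl⟩
          by_contra hx
          exact hn ⟨b, hx, hab⟩
      rw [key]
      exact ((hZ.2 _ ((hU.compl).preimage hhc)).compl).isOpen
    · have key : f ⁻¹' {C : VSpace X | (C.1 ∩ V).Nonempty} = ↑(lowerClosure (h ⁻¹' V)) := by
        ext a
        simp only [Set.mem_preimage, Set.mem_setOf_eq, SetLike.mem_coe, mem_lowerClosure]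
        constructor
        · rintro ⟨x, ⟨b, hab, rfl⟩, hxV⟩
          exact ⟨b, hxV, hab⟩
        · rintro ⟨b, hbV, hab⟩
          exact ⟨h b, ⟨b, hab, rfl⟩, hbV⟩
      rw [key]
      exact (hZ.2 _ (hV.preimage hhc)).isOpen
  · -- monotone
    intro a b hab
    show h '' Set.Ici b ⊆ h '' Set.Ici a
    exact Set.image_mono (f := h) (Set.Ici_subset_Ici.mpr hab)
  · -- r-openness
    intro a D hD
    have hrD : r D ∈ h '' Set.Ici a := hD (hr D).1
    obtain ⟨a', ha', heq⟩ := hrD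
    exact ⟨a', ha', by rw [hrh a', heq]⟩
  · -- uniqueness
    intro k _ hkm hko hkr
    funext a
    apply Subtype.ext
    apply Subtype.ext
    show (k a).1.1 = h '' Set.Ici a
    apply Set.Subset.antisymm
    · intro x hx
      have hxIci : (k a).1.1 ∩ Set.Ici x ⊆ Set.Ici x := Set.inter_subset_right
      have hmx : x ∈ (k a).1.1 ∩ Set.Ici x := ⟨hx, le_refl x⟩
      have hgoD : GOpenSub g ((k a).1.1 ∩ Set.Ici x) := by
        rintro s ⟨hs1, hs2⟩ b hb
        obtain ⟨s', hs', hss', hgs'⟩ := (k a).2.2 s hs1 b hb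
        exact ⟨s', ⟨hs', le_trans hs2 hss'⟩, hss', hgs'⟩
      set D : {C : VSpace X // Rooted C ∧ GOpenSub g C.1} :=
        ⟨⟨(k a).1.1 ∩ Set.Ici x, ⟨x, hmx⟩, ((k a).1.2.2).inter (hIciX x)⟩,
          ⟨x, hmx, hxIci⟩, hgoD⟩ with hD
      have hkaD : k a ≤ D := Set.inter_subset_left
      obtain ⟨a', ha', heq⟩ := hko a D hkaD
      have hrD : r D = x := hrootu D x hmx hxIci
      exact ⟨a', ha', by rw [← hkr a', heq, hrD]⟩
    · rintro x ⟨b, hab, rfl⟩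
      have : (k b).1.1 ⊆ (k a).1.1 := hkm hab
      have hb : h b ∈ (k b).1.1 := by rw [← hkr b]; exact (hr (k b)).1
      exact this hb
end

section
/- Let X be an Esakia space. Then max(V_G(X)) is homeomorphic to X, where V_G(X) is the inverse limit of the Vietoris complex X, V_r(X), V_{r_1}(V_r(X)), … over X, with consecutive root maps. -/
open Set

universe u

/-- A stage of the Vietoris complex: an ordered topological space `T` together with
the reference map `root : T → B` to the previous stage. -/
structure VStage : Type (u + 1) where
  B : Type u
  T : Type u
  topo : TopologicalSpace T
  le : T → T → Prop
  root : T → B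

/-- The next stage `V_{r}(T)` of the Vietoris complex: nonempty closed rooted
`root`-open subsets of `T`, with the Vietoris topology, the reverse inclusion order,
and the new root map. -/
noncomputable def nextStage (s : VStage.{u}) : VStage.{u} :=
  letI := s.topo
  { B := s.T
    T := { C : Set s.T // C.Nonempty ∧ IsClosed C ∧ (∃ r ∈ C, ∀ c ∈ C, s.le r c) ∧
            ∀ c ∈ C, ∀ b : s.T, s.le c b → ∃ c' ∈ C, s.le c c' ∧ s.root c' = s.root b }
    topo := TopologicalSpace.generateFrom
      ({ S | ∃ U : Set s.T, IsClopen U ∧ S = { C | C.1 ⊆ U } } ∪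
        { S | ∃ V : Set s.T, IsClopen V ∧ S = { C | (C.1 ∩ V).Nonempty } })
    le := fun C D => D.1 ⊆ C.1
    root := fun C => C.2.2.2.1.choose }

/-- The Vietoris complex over `X` (with `g` the terminal map):
`V_0(X) = X`, `V_{n+1}(X) = V_{r_n}(V_n(X))`. -/
noncomputable def tower (X : Type u) [TopologicalSpace X] [PartialOrder X] :
    ℕ → VStage.{u} :=
  fun n =>
    Nat.rec (⟨PUnit, X, inferInstance, fun x y => x ≤ y, fun _ => PUnit.unit⟩ : VStage.{u})
      (fun _ s => nextStage s) n

noncomputable instance (X : Type u) [TopologicalSpace X] [PartialOrder X] (n : ℕ) :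
    TopologicalSpace ((tower X n).T) := (tower X n).topo

/-- `V_G(X)`: the inverse limit of the Vietoris complex over `X`. -/
noncomputable def VG (X : Type u) [TopologicalSpace X] [PartialOrder X] : Type u :=
  { x : ∀ n, (tower X n).T // ∀ n, (tower X (n + 1)).root (x (n + 1)) = x n }

noncomputable instance (X : Type u) [TopologicalSpace X] [PartialOrder X] :
    TopologicalSpace (VG X) :=
  inferInstanceAs (TopologicalSpace
    { x : ∀ n, (tower X n).T // ∀ n, (tower X (n + 1)).root (x (n + 1)) = x n })

/-- The maximal elements of `V_G(X)`, with respect to the componentwise order. -/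
noncomputable def MaxVG (X : Type u) [TopologicalSpace X] [PartialOrder X] : Type u :=
  { z : VG X // ∀ w : VG X, (∀ n, (tower X n).le (z.1 n) (w.1 n)) → w = z }

noncomputable instance (X : Type u) [TopologicalSpace X] [PartialOrder X] :
    TopologicalSpace (MaxVG X) :=
  inferInstanceAs (TopologicalSpace
    { z : VG X // ∀ w : VG X, (∀ n, (tower X n).le (z.1 n) (w.1 n)) → w = z })

section Dev

variable {X : Type u} [TopologicalSpace X] [PartialOrder X]

lemma le_refl_st : ∀ (n : ℕ) (a : (tower X n).T), (tower X n).le a a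
  | 0, a => @le_refl X _ a
  | (_ + 1), _ => subset_refl _

lemma le_trans_st : ∀ (n : ℕ) {a b c : (tower X n).T},
    (tower X n).le a b → (tower X n).le b c → (tower X n).le a c
  | 0, _, _, _, h1, h2 => @le_trans X _ _ _ _ h1 h2
  | (_ + 1), _, _, _, h1, h2 => Set.Subset.trans h2 h1

lemma le_antisymm_st : ∀ (n : ℕ) {a b : (tower X n).T},
    (tower X n).le a b → (tower X n).le b a → a = b
  | 0, _, _, h1, h2 => @le_antisymm X _ _ _ h1 h2
  | (_ + 1), _, _, h1, h2 => Subtype.ext (subset_antisymm h2 h1)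

lemma root_mem (n : ℕ) (C : (tower X (n + 1)).T) : (tower X (n + 1)).root C ∈ C.1 :=
  C.2.2.2.1.choose_spec.1

lemma root_le (n : ℕ) (C : (tower X (n + 1)).T) :
    ∀ c ∈ C.1, (tower X n).le ((tower X (n + 1)).root C) c :=
  C.2.2.2.1.choose_spec.2

lemma root_eq (n : ℕ) (C : (tower X (n + 1)).T) (r : (tower X n).T) (hr : r ∈ C.1)
    (hmin : ∀ c ∈ C.1, (tower X n).le r c) : (tower X (n + 1)).root C = r :=
  le_antisymm_st n (root_le n C r hr) (hmin _ (root_mem n C))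

lemma rootopen_st (n : ℕ) (C : (tower X (n + 1)).T) :
    ∀ c ∈ C.1, ∀ b : (tower X n).T, (tower X n).le c b →
      ∃ c' ∈ C.1, (tower X n).le c c' ∧ (tower X n).root c' = (tower X n).root b :=
  C.2.2.2.2

lemma nonempty_st (n : ℕ) (C : (tower X (n + 1)).T) : C.1.Nonempty := C.2.1

lemma closed_st (n : ℕ) (C : (tower X (n + 1)).T) :
    @IsClosed ((tower X n).T) _ C.1 := C.2.2.1

end Dev
section Dev2

variable {X : Type u} [TopologicalSpace X] [PartialOrder X]

/-- The generating set of the stage `n+1` topology. -/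
def stGen (n : ℕ) : Set (Set ((tower X (n + 1)).T)) :=
  { S | ∃ U : Set ((tower X n).T), IsClopen U ∧ S = { C : (tower X (n + 1)).T | C.1 ⊆ U } } ∪
    { S | ∃ V : Set ((tower X n).T), IsClopen V ∧
      S = { C : (tower X (n + 1)).T | (C.1 ∩ V).Nonempty } }

lemma topo_succ_eq (n : ℕ) :
    (inferInstance : TopologicalSpace ((tower X (n + 1)).T)) =
      TopologicalSpace.generateFrom (stGen (X := X) n) := rfl

lemma isOpen_gen (n : ℕ) {S : Set ((tower X (n + 1)).T)} (hS : S ∈ stGen (X := X) n) :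
    IsOpen S := by
  have h : (TopologicalSpace.generateFrom (stGen (X := X) n)).IsOpen S :=
    TopologicalSpace.GenerateOpen.basic _ hS
  exact h

lemma isOpen_sub_st (n : ℕ) {U : Set ((tower X n).T)} (hU : IsClopen U) :
    IsOpen { C : (tower X (n + 1)).T | C.1 ⊆ U } :=
  isOpen_gen n (Or.inl ⟨U, hU, rfl⟩)

lemma isOpen_hit_st (n : ℕ) {V : Set ((tower X n).T)} (hV : IsClopen V) :
    IsOpen { C : (tower X (n + 1)).T | (C.1 ∩ V).Nonempty } :=
  isOpen_gen n (Or.inr ⟨V, hV, rfl⟩)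

lemma compl_sub_st (n : ℕ) (U : Set ((tower X n).T)) :
    { C : (tower X (n + 1)).T | C.1 ⊆ U }ᶜ
      = { C : (tower X (n + 1)).T | (C.1 ∩ Uᶜ).Nonempty } := by
  ext C
  simp [Set.not_subset, Set.Nonempty]
  exact Set.not_subset

lemma compl_hit_st (n : ℕ) (V : Set ((tower X n).T)) :
    { C : (tower X (n + 1)).T | (C.1 ∩ V).Nonempty }ᶜ
      = { C : (tower X (n + 1)).T | C.1 ⊆ Vᶜ } := by
  ext C
  constructor
  · intro h x hx hxV
    exact h ⟨x, hx, hxV⟩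
  · intro h hne
    obtain ⟨x, hx, hxV⟩ := hne
    exact h hx hxV

lemma isClopen_gen (n : ℕ) {S : Set ((tower X (n + 1)).T)} (hS : S ∈ stGen (X := X) n) :
    IsClopen S := by
  refine ⟨⟨?_⟩, isOpen_gen n hS⟩
  rcases hS with ⟨U, hU, rfl⟩ | ⟨V, hV, rfl⟩
  · rw [compl_sub_st]
    exact isOpen_hit_st n hU.compl
  · rw [compl_hit_st]
    exact isOpen_sub_st n hV.compl

/-- Stage 0: clopen neighborhoods inside opens, from Priestley-ness. -/
lemma clopen_basis_zero (hX : IsPriestley X) {W : Set X} (hW : IsOpen W) {p : X} (hp : p ∈ W) :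
    ∃ V : Set X, IsClopen V ∧ p ∈ V ∧ V ⊆ W := by
  obtain ⟨hcomp, hsep⟩ := hX
  have hF : IsCompact Wᶜ := hW.isClosed_compl.isCompact
  have key : ∀ y ∈ Wᶜ, ∃ C : Set X, IsClopen C ∧ y ∈ C ∧ p ∉ C := by
    intro y hy
    have hne : y ≠ p := fun h => hy (h ▸ hp)
    by_cases h : y ≤ p
    · have h' : ¬p ≤ y := fun h' => hne (le_antisymm h h')
      obtain ⟨U, hU, _, hpU, hyU⟩ := hsep p y h'
      exact ⟨Uᶜ, hU.compl, hyU, fun hc => hc hpU⟩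
    · obtain ⟨U, hU, _, hyU, hpU⟩ := hsep y p h
      exact ⟨U, hU, hyU, hpU⟩
  choose C hC1 hC2 hC3 using key
  obtain ⟨t, ht⟩ := hF.elim_nhds_subcover' (fun y hy => C y hy)
    (fun y hy => (hC1 y hy).2.mem_nhds (hC2 y hy))
  refine ⟨(⋃ y ∈ t, C y.1 y.2)ᶜ, ?_, ?_, ?_⟩
  · exact (t.finite_toSet.isClopen_biUnion (fun y _ => hC1 y.1 y.2)).compl
  · simp only [Set.mem_compl_iff, Set.mem_iUnion]
    rintro ⟨y, hy, hmem⟩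
    exact hC3 y.1 y.2 hmem
  · intro q hq
    by_contra hqW
    exact hq (ht hqW)

/-- Every nonempty open set at any stage contains a clopen neighborhood of each point. -/
lemma clopen_basis_st (hX : IsPriestley X) :
    ∀ (n : ℕ) (W : Set ((tower X n).T)), IsOpen W → ∀ p ∈ W,
      ∃ V : Set ((tower X n).T), IsClopen V ∧ p ∈ V ∧ V ⊆ W := by
  intro n
  cases n with
  | zero => exact fun W hW p hp => clopen_basis_zero hX hW hp
  | succ n =>
    intro W hW p hp
    have hbasis := TopologicalSpace.isTopologicalBasis_of_subbasis (topo_succ_eq (X := X) n)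
    obtain ⟨V, hVmem, hpV, hVW⟩ := hbasis.exists_subset_of_mem_open hp hW
    obtain ⟨f, ⟨hfin, hsub⟩, rfl⟩ := hVmem
    refine ⟨⋂₀ f, ?_, hpV, hVW⟩
    have : ⋂₀ f = ⋂ S ∈ f, S := by simp [Set.sInter_eq_biInter]
    rw [this]
    exact hfin.isClopen_biInter (fun S hS => isClopen_gen n (hsub hS))

end Dev2
section Dev3

variable {X : Type u} [TopologicalSpace X] [PartialOrder X]

lemma isClosed_sub_of_closed (hX : IsPriestley X) (n : ℕ) {F : Set ((tower X n).T)}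
    (hF : IsClosed F) : IsClosed { C : (tower X (n + 1)).T | C.1 ⊆ F } := by
  rw [← isOpen_compl_iff, compl_sub_st]
  rw [isOpen_iff_forall_mem_open]
  rintro C ⟨q, hq, hqF⟩
  obtain ⟨V, hV, hqV, hVsub⟩ := clopen_basis_st hX n Fᶜ hF.isOpen_compl q hqF
  refine ⟨{ C : (tower X (n + 1)).T | (C.1 ∩ V).Nonempty }, ?_, isOpen_hit_st n hV, ⟨q, hq, hqV⟩⟩
  rintro D ⟨r, hr, hrV⟩
  exact ⟨r, hr, hVsub hrV⟩

lemma isClosed_upset (hX : IsPriestley X) :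
    ∀ (n : ℕ) (w : (tower X n).T), IsClosed { d : (tower X n).T | (tower X n).le w d } := by
  intro n
  cases n with
  | zero =>
    intro w
    rw [← isOpen_compl_iff, isOpen_iff_forall_mem_open]
    intro d hd
    have hd' : ¬ @LE.le X _ w d := hd
    obtain ⟨U, hU, hUup, hwU, hdU⟩ := hX.2 w d hd'
    refine ⟨Uᶜ, ?_, hU.compl.isOpen, hdU⟩
    intro d' hd' hled'
    exact hd' (hUup hled' hwU)
  | succ n =>
    intro w
    exact isClosed_sub_of_closed hX n (closed_st n w)

lemma isClosed_singleton_st (hX : IsPriestley X) :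
    ∀ (n : ℕ) (e : (tower X n).T), IsClosed ({e} : Set ((tower X n).T)) := by
  intro n
  cases n with
  | zero =>
    intro e
    rw [← isOpen_compl_iff, isOpen_iff_forall_mem_open]
    intro d hd
    have hne : d ≠ e := hd
    by_cases h : @LE.le X _ d e
    · have h' : ¬ @LE.le X _ e d := fun h' => hne (@le_antisymm X _ _ _ h h')
      obtain ⟨U, hU, hUup, heU, hdU⟩ := hX.2 e d h'
      exact ⟨Uᶜ, fun y hy (hye : y = e) => hy (hye ▸ heU), hU.compl.isOpen, hdU⟩
    · obtain ⟨U, hU, hUup, hdU, heU⟩ := hX.2 d e h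
      exact ⟨U, fun y hy (hye : y = e) => heU (hye ▸ hy), hU.isOpen, hdU⟩
  | succ n =>
    intro e
    rw [← isOpen_compl_iff, isOpen_iff_forall_mem_open]
    intro d hd
    have hne : d ≠ e := hd
    by_cases hsub : d.1 ⊆ e.1
    · have hns : ¬ e.1 ⊆ d.1 := fun h => hne (Subtype.ext (subset_antisymm hsub h))
      obtain ⟨p, hpe, hpd⟩ := Set.not_subset.1 hns
      obtain ⟨V, hV, hpV, hVsub⟩ :=
        clopen_basis_st hX n (d.1)ᶜ (closed_st n d).isOpen_compl p hpd
      refine ⟨{ C : (tower X (n + 1)).T | C.1 ⊆ Vᶜ }, ?_, isOpen_sub_st n hV.compl, ?_⟩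
      · intro C hC (hCe : C = e)
        exact hC (hCe ▸ hpe) hpV
      · intro q hq
        exact fun hqV => hVsub hqV hq
    · obtain ⟨p, hpd, hpe⟩ := Set.not_subset.1 hsub
      obtain ⟨V, hV, hpV, hVsub⟩ :=
        clopen_basis_st hX n (e.1)ᶜ (closed_st n e).isOpen_compl p hpe
      refine ⟨{ C : (tower X (n + 1)).T | (C.1 ∩ V).Nonempty }, ?_, isOpen_hit_st n hV, ⟨p, hpd, hpV⟩⟩
      rintro C ⟨r, hrC, hrV⟩ (hCe : C = e)
      exact hVsub hrV (hCe ▸ hrC)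

/-- Build the singleton `{e}` as an element of the next stage. -/
noncomputable def mkSingleton (hX : IsPriestley X) (n : ℕ) (e : (tower X n).T)
    (hrt : ∀ b : (tower X n).T, (tower X n).le e b →
      (tower X n).root b = (tower X n).root e) : (tower X (n + 1)).T :=
  ⟨({e} : Set ((tower X n).T)), ⟨e, rfl⟩, isClosed_singleton_st hX n e,
    ⟨e, rfl, fun c hc => by rw [show c = e from hc]; exact le_refl_st n e⟩, by
      rintro c (rfl : c = e) b hb
      exact ⟨c, rfl, le_refl_st n c, (hrt b hb).symm⟩⟩

lemma mkSingleton_fst (hX : IsPriestley X) (n : ℕ) (e : (tower X n).T) (hrt) :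
    (mkSingleton hX n e hrt).1 = ({e} : Set ((tower X n).T)) := rfl

lemma le_singleton_eq (n : ℕ) (f : (tower X (n + 1)).T) (g : (tower X n).T)
    (hf : f.1 = {g}) (b : (tower X (n + 1)).T) (hb : (tower X (n + 1)).le f b) : b = f := by
  apply Subtype.ext
  rw [hf]
  have hb' : b.1 ⊆ ({g} : Set ((tower X n).T)) := hf ▸ hb
  rcases Set.subset_singleton_iff_eq.1 hb' with h | h
  · exact absurd h (nonempty_st n b).ne_empty
  · exact h

/-- The iterated-singleton chain over `x`, with the invariant that any element above it
has the same root. -/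
noncomputable def chainAux (hX : IsPriestley X) (x : X) :
    ∀ n, { e : (tower X n).T // ∀ b : (tower X n).T, (tower X n).le e b →
      (tower X n).root b = (tower X n).root e } :=
  Nat.rec ⟨x, fun _ _ => rfl⟩ (fun n p =>
    ⟨mkSingleton hX n p.1 p.2, fun b hb => by
      rw [le_singleton_eq n (mkSingleton hX n p.1 p.2) p.1 rfl b hb]⟩)

noncomputable def chainEl (hX : IsPriestley X) (x : X) (n : ℕ) : (tower X n).T :=
  (chainAux hX x n).1

lemma chainEl_zero (hX : IsPriestley X) (x : X) : chainEl hX x 0 = x := rfl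

lemma chainEl_succ_fst (hX : IsPriestley X) (x : X) (n : ℕ) :
    (chainEl hX x (n + 1)).1 = ({chainEl hX x n} : Set ((tower X n).T)) := rfl

lemma root_chainEl (hX : IsPriestley X) (x : X) (n : ℕ) :
    (tower X (n + 1)).root (chainEl hX x (n + 1)) = chainEl hX x n := by
  apply root_eq
  · rw [chainEl_succ_fst]; rfl
  · intro c hc
    rw [chainEl_succ_fst] at hc
    rw [show c = chainEl hX x n from hc]
    exact le_refl_st n _

/-- The chain as a thread of the inverse limit. -/
noncomputable def chainVG (hX : IsPriestley X) (x : X) : VG X :=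
  ⟨fun n => chainEl hX x n, fun n => root_chainEl hX x n⟩

lemma eq_chain_of_le (hX : IsPriestley X) (x : X) (w : VG X)
    (hw : ∀ n, (tower X n).le (chainEl hX x n) (w.1 n)) :
    ∀ n, w.1 n = chainEl hX x n := by
  have hsucc : ∀ n, w.1 (n + 1) = chainEl hX x (n + 1) := by
    intro n
    exact le_singleton_eq n (chainEl hX x (n + 1)) (chainEl hX x n)
      (chainEl_succ_fst hX x n) (w.1 (n + 1)) (hw (n + 1))
  intro n
  cases n with
  | zero =>
    have h0 : w.1 0 = (tower X 1).root (w.1 1) := (w.2 0).symm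
    rw [h0, hsucc 0, root_chainEl]
  | succ n => exact hsucc n

lemma chain_maximal (hX : IsPriestley X) (x : X) :
    ∀ w : VG X, (∀ n, (tower X n).le ((chainVG hX x).1 n) (w.1 n)) → w = chainVG hX x := by
  intro w hw
  exact Subtype.ext (funext (eq_chain_of_le hX x w hw))

end Dev3
section Dev4

variable {X : Type u} [TopologicalSpace X] [PartialOrder X]

/-- The relative up-set of `w` inside `z (k+1)`, as a stage `k+1` element. -/
noncomputable def upElt (hX : IsPriestley X) (z : VG X) (k : ℕ) (w : (tower X k).T)
    (hw : w ∈ (z.1 (k + 1)).1) : (tower X (k + 1)).T :=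
  ⟨(z.1 (k + 1)).1 ∩ { d : (tower X k).T | (tower X k).le w d },
    ⟨w, hw, le_refl_st k w⟩,
    (closed_st k (z.1 (k + 1))).inter (isClosed_upset hX k w),
    ⟨w, ⟨hw, le_refl_st k w⟩, fun c hc => hc.2⟩, by
      rintro c ⟨hc1, hc2⟩ b hb
      obtain ⟨c', hc', hcc', hroot⟩ := rootopen_st k (z.1 (k + 1)) c hc1 b hb
      exact ⟨c', ⟨hc', le_trans_st k hc2 hcc'⟩, hcc', hroot⟩⟩

lemma exists_above (hX : IsPriestley X) (z : VG X) (k : ℕ) (w : (tower X k).T)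
    (hw : w ∈ (z.1 (k + 1)).1) :
    ∃ w' : (tower X (k + 1)).T, w' ∈ (z.1 (k + 2)).1 ∧ (tower X (k + 1)).root w' = w := by
  have hzmem : z.1 (k + 1) ∈ (z.1 (k + 2)).1 := by
    have h := root_mem (k + 1) (z.1 (k + 2))
    rwa [z.2 (k + 1)] at h
  have hle : (tower X (k + 1)).le (z.1 (k + 1)) (upElt hX z k w hw) := fun d hd => hd.1
  obtain ⟨c', hc', _, hroot⟩ :=
    rootopen_st (k + 1) (z.1 (k + 2)) (z.1 (k + 1)) hzmem (upElt hX z k w hw) hle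
  refine ⟨c', hc', ?_⟩
  rw [hroot]
  exact root_eq k (upElt hX z k w hw) w ⟨hw, le_refl_st k w⟩ (fun c hc => hc.2)

/-- A thread above a given thread `z`, starting at a prescribed element `e ∈ z 1`. -/
noncomputable def bigW (hX : IsPriestley X) (z : VG X) (e : (tower X 0).T)
    (he : e ∈ (z.1 1).1) : ∀ k, { w : (tower X k).T // w ∈ (z.1 (k + 1)).1 } :=
  Nat.rec ⟨e, he⟩ (fun k p =>
    ⟨(exists_above hX z k p.1 p.2).choose, (exists_above hX z k p.1 p.2).choose_spec.1⟩)

lemma bigW_root (hX : IsPriestley X) (z : VG X) (e : (tower X 0).T)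
    (he : e ∈ (z.1 1).1) (k : ℕ) :
    (tower X (k + 1)).root (bigW hX z e he (k + 1)).1 = (bigW hX z e he k).1 :=
  (exists_above hX z k (bigW hX z e he k).1 (bigW hX z e he k).2).choose_spec.2

lemma maximal_eq_chain (hX : IsPriestley X) (z : MaxVG X) :
    ∀ n, z.1.1 n = chainEl hX (z.1.1 0) n := by
  have hz0 : z.1.1 0 ∈ (z.1.1 1).1 := by
    have h := root_mem 0 (z.1.1 1)
    rwa [z.1.2 0] at h
  have key : (z.1.1 1).1 = ({z.1.1 0} : Set ((tower X 0).T)) := by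
    by_contra hkey
    have hex : ∃ e : (tower X 0).T, e ∈ (z.1.1 1).1 ∧ e ≠ z.1.1 0 := by
      by_contra h
      push_neg at h
      exact hkey (Set.eq_singleton_iff_unique_mem.2 ⟨hz0, fun e he => h e he⟩)
    obtain ⟨e, he, hne⟩ := hex
    set w : VG X := ⟨fun k => (bigW hX z.1 e he k).1, bigW_root hX z.1 e he⟩ with hwdef
    have hle : ∀ n, (tower X n).le (z.1.1 n) (w.1 n) := by
      intro n
      have h := root_le n (z.1.1 (n + 1)) (w.1 n) (bigW hX z.1 e he n).2
      rwa [z.1.2 n] at h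
    have heq := z.2 w hle
    have hw0 : w.1 0 = z.1.1 0 := congrFun (congrArg Subtype.val heq) 0
    exact hne hw0
  have hsucc : ∀ n, z.1.1 (n + 1) = chainEl hX (z.1.1 0) (n + 1) := by
    intro n
    induction n with
    | zero =>
      apply Subtype.ext
      rw [key]
      rfl
    | succ n ih =>
      apply Subtype.ext
      show _ = ({chainEl hX (z.1.1 0) (n + 1)} : Set ((tower X (n + 1)).T))
      apply Set.eq_singleton_iff_unique_mem.2
      constructor
      · have h := root_mem (n + 1) (z.1.1 (n + 2))
        rw [z.1.2 (n + 1)] at h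
        exact ih ▸ h
      · intro c hc
        have h := root_le (n + 1) (z.1.1 (n + 2)) c hc
        rw [z.1.2 (n + 1)] at h
        have hc' : c = z.1.1 (n + 1) :=
          le_singleton_eq n (z.1.1 (n + 1)) (chainEl hX (z.1.1 0) n)
            (by rw [ih]; exact chainEl_succ_fst hX (z.1.1 0) n) c h
        rw [hc', ih]
  intro n
  cases n with
  | zero => rfl
  | succ n => exact hsucc n

lemma continuous_chainEl (hX : IsPriestley X) :
    ∀ n, Continuous (fun x : X => chainEl hX x n) := by
  intro n
  induction n with
  | zero => exact continuous_id
  | succ n ih =>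
    have h : @Continuous X ((tower X (n + 1)).T) _
        (TopologicalSpace.generateFrom (stGen (X := X) n))
        (fun x : X => chainEl hX x (n + 1)) := by
      apply continuous_generateFrom_iff.mpr
      rintro s (⟨U, hU, rfl⟩ | ⟨V, hV, rfl⟩)
      · have hpre : (fun x : X => chainEl hX x (n + 1)) ⁻¹' {C | C.1 ⊆ U}
            = (fun x : X => chainEl hX x n) ⁻¹' U := by
          ext x
          simp only [Set.mem_preimage, Set.mem_setOf_eq, chainEl_succ_fst,
            Set.singleton_subset_iff]
          exact Set.singleton_subset_iff
        rw [hpre]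
        exact hU.isOpen.preimage ih
      · have hpre : (fun x : X => chainEl hX x (n + 1)) ⁻¹' {C | (C.1 ∩ V).Nonempty}
            = (fun x : X => chainEl hX x n) ⁻¹' V := by
          ext x
          simp only [Set.mem_preimage, Set.mem_setOf_eq, chainEl_succ_fst,
            Set.singleton_inter_nonempty]
          exact Set.singleton_inter_nonempty
        rw [hpre]
        exact hV.isOpen.preimage ih
    exact h

end Dev4
/-- If `X` is an Esakia space, then `max(V_G(X))` is homeomorphic to `X`. -/
theorem max_VG_homeomorphic (X : Type u) [TopologicalSpace X] [PartialOrder X]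
    (hX : IsEsakia X) : Nonempty (MaxVG X ≃ₜ X) := by
  obtain ⟨hP, -⟩ := hX
  refine ⟨{
    toFun := fun z => z.1.1 0
    invFun := fun x => ⟨chainVG hP x, chain_maximal hP x⟩
    left_inv := ?_
    right_inv := fun x => rfl
    continuous_toFun := ?_
    continuous_invFun := ?_ }⟩
  · intro z
    apply Subtype.ext
    apply Subtype.ext
    exact funext fun n => (maximal_eq_chain hP z n).symm
  · have h1 : Continuous (fun z : MaxVG X => z.1) := continuous_subtype_val
    have h2 : Continuous (fun v : VG X => v.1) := continuous_subtype_val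
    have h3 : Continuous (fun f : ∀ n, (tower X n).T => f 0) := continuous_apply 0
    exact h3.comp (h2.comp h1)
  · apply Continuous.subtype_mk
    apply Continuous.subtype_mk
    exact continuous_pi fun n => continuous_chainEl hP n
end

section
/- Let X be an extremally order-disconnected Esakia space. Then max(X), the subspace of maximal points, is an extremally disconnected Stone space. -/
open Set

/-- Extremally order-disconnected: the closure of every open upset is clopen. -/
def ExtremallyOrderDisconnected (X : Type*) [TopologicalSpace X] [Preorder X] : Prop :=
  ∀ U : Set X, IsOpen U → IsUpperSet U → IsClopen (closure U)

section Aux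

variable {X : Type*} [TopologicalSpace X] [PartialOrder X]

/-- A Priestley space is totally separated. -/
theorem IsPriestley.totallySeparated (hX : IsPriestley X) : TotallySeparatedSpace X := by
  rw [totallySeparatedSpace_iff_exists_isClopen]
  intro x y hxy
  rcases (not_and_or.mp (fun h : x ≤ y ∧ y ≤ x => hxy (le_antisymm h.1 h.2))) with h | h
  · obtain ⟨U, hU, _, hxU, hyU⟩ := hX.2 x y h
    exact ⟨U, hU, hxU, hyU⟩
  · obtain ⟨U, hU, _, hyU, hxU⟩ := hX.2 y x h
    exact ⟨Uᶜ, hU.compl, hxU, by simpa using hyU⟩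

/-- In a Priestley space, `Ici a` is closed. -/
theorem IsPriestley.isClosed_Ici (hX : IsPriestley X) (a : X) : IsClosed (Ici a) := by
  rw [← isOpen_compl_iff, isOpen_iff_mem_nhds]
  intro y hy
  obtain ⟨U, hU, hUup, haU, hyU⟩ := hX.2 a y hy
  refine Filter.mem_of_superset (hU.compl.isOpen.mem_nhds hyU) ?_
  intro z hz hz'
  exact hz (hUup hz' haU)

/-- In a Priestley space, the lower closure of a closed set is closed. -/
theorem IsPriestley.isClosed_lowerClosure (hX : IsPriestley X) {F : Set X} (hF : IsClosed F) :
    IsClosed (↑(lowerClosure F) : Set X) := by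
  haveI : CompactSpace X := hX.1
  rw [← isOpen_compl_iff, isOpen_iff_mem_nhds]
  intro x hx
  have key : ∀ f ∈ F, ¬ x ≤ f := by
    intro f hf hle
    exact hx (mem_lowerClosure.mpr ⟨f, hf, hle⟩)
  choose! U hU hUup hxU hfU using fun f hf => hX.2 x f (key f hf)
  have hcover : F ⊆ ⋃ f ∈ F, (U f)ᶜ := fun f hf => mem_biUnion hf (hfU f hf)
  obtain ⟨t, hts, htfin, htcover⟩ := hF.isCompact.elim_finite_subcover_image
    (fun f hf => (hU f hf).compl.isOpen) hcover
  have hWopen : IsOpen (⋂ f ∈ t, U f) :=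
    htfin.isOpen_biInter (fun f hf => (hU f (hts hf)).isOpen)
  refine Filter.mem_of_superset (hWopen.mem_nhds ?_) ?_
  · exact mem_iInter₂.2 fun f hf => hxU f (hts hf)
  · intro w hw hw'
    obtain ⟨g, hgF, hwg⟩ := mem_lowerClosure.mp hw'
    obtain ⟨f, hft, hgf⟩ := mem_iUnion₂.mp (htcover hgF)
    exact hgf ((hUup f (hts hft)) hwg (mem_iInter₂.mp hw f hft))

/-- In a Priestley space, every point lies below a maximal point. -/
theorem IsPriestley.exists_max (hX : IsPriestley X) (x : X) :
    ∃ m, x ≤ m ∧ ∀ y, m ≤ y → y = m := by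
  haveI : CompactSpace X := hX.1
  have ih : ∀ c ⊆ Ici x, IsChain (· ≤ ·) c → ∀ y ∈ c, ∃ ub, ∀ z ∈ c, z ≤ ub := by
    intro c hc hchain y hy
    haveI : Nonempty c := ⟨⟨y, hy⟩⟩
    have hne : (⋂ a : c, Ici (a : X)).Nonempty := by
      refine IsCompact.nonempty_iInter_of_directed_nonempty_isCompact_isClosed
        (fun a : c => Ici (a : X)) ?_ (fun a => ⟨a, le_rfl⟩)
        (fun a => (hX.isClosed_Ici _).isCompact) (fun a => hX.isClosed_Ici _)
      rintro ⟨a, ha⟩ ⟨b, hb⟩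
      rcases hchain.total ha hb with h | h
      · exact ⟨⟨b, hb⟩, Ici_subset_Ici.mpr h, subset_rfl⟩
      · exact ⟨⟨a, ha⟩, subset_rfl, Ici_subset_Ici.mpr h⟩
    obtain ⟨ub, hub⟩ := hne
    exact ⟨ub, fun z hz => mem_iInter.mp hub ⟨z, hz⟩⟩
  obtain ⟨m, hxm, hm⟩ := zorn_le_nonempty_Ici₀ x ih x le_rfl
  exact ⟨m, hxm, fun y hmy => le_antisymm (hm hmy) hmy⟩

/-- In an Esakia space, the set of maximal points is closed. -/
theorem IsEsakia.isClosed_max (hX : IsEsakia X) :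
    IsClosed {x : X | ∀ y : X, x ≤ y → y = x} := by
  rw [← isOpen_compl_iff, isOpen_iff_mem_nhds]
  intro x hx
  simp only [mem_compl_iff, mem_setOf_eq, not_forall] at hx
  obtain ⟨y, hxy, hyx⟩ := hx
  have h1 : ¬ y ≤ x := fun h => hyx (le_antisymm h hxy)
  obtain ⟨U, hU, hUup, hyU, hxU⟩ := hX.1.2 y x h1
  have hdown := hX.2 U hU
  refine Filter.mem_of_superset ((hdown.isOpen.inter hU.compl.isOpen).mem_nhds
    ⟨mem_lowerClosure.mpr ⟨y, hyU, hxy⟩, hxU⟩) ?_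
  rintro z ⟨hz1, hz2⟩ hz
  obtain ⟨u, huU, hzu⟩ := mem_lowerClosure.mp hz1
  exact hz2 ((hz u hzu) ▸ huU)

/-- In an Esakia space, the closure of an upper set is an upper set. -/
theorem IsEsakia.isUpperSet_closure (hX : IsEsakia X) {U : Set X} (hU : IsUpperSet U) :
    IsUpperSet (closure U) := by
  haveI : CompactSpace X := hX.1.1
  haveI : TotallySeparatedSpace X := hX.1.totallySeparated
  intro a b hab ha
  by_contra hb
  rw [mem_closure_iff] at hb
  push_neg at hb
  obtain ⟨O, hOopen, hbO, hOU⟩ := hb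
  obtain ⟨B, hB, hbB, hBO⟩ := compact_exists_isClopen_in_isOpen hOopen hbO
  have hdown := hX.2 B hB
  have hadown : a ∈ (↑(lowerClosure B) : Set X) := mem_lowerClosure.mpr ⟨b, hbB, hab⟩
  obtain ⟨u, hu1, hu2⟩ := mem_closure_iff.mp ha _ hdown.isOpen hadown
  obtain ⟨b', hb'B, hub'⟩ := mem_lowerClosure.mp hu1
  exact (not_nonempty_iff_eq_empty.mpr hOU) ⟨b', hBO hb'B, hU hub' hu2⟩

end Aux

/-- If `X` is an extremally order-disconnected Esakia space, then `max(X)` is an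
extremally disconnected Stone space. -/
theorem max_extremally_disconnected (X : Type*) [TopologicalSpace X] [PartialOrder X]
    (hX : IsEsakia X) (hE : ExtremallyOrderDisconnected X) :
    ExtremallyDisconnected { x : X // ∀ y : X, x ≤ y → y = x } ∧
      CompactSpace { x : X // ∀ y : X, x ≤ y → y = x } ∧
      T2Space { x : X // ∀ y : X, x ≤ y → y = x } ∧
      TotallyDisconnectedSpace { x : X // ∀ y : X, x ≤ y → y = x } := by
  haveI : CompactSpace X := hX.1.1
  haveI : TotallySeparatedSpace X := hX.1.totallySeparated
  set M : Set X := {x : X | ∀ y : X, x ≤ y → y = x} with hM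
  have hMclosed : IsClosed M := hX.isClosed_max
  refine ⟨?_, isCompact_iff_compactSpace.mp hMclosed.isCompact, inferInstance, inferInstance⟩
  constructor
  intro V' hV'
  obtain ⟨U, hUopen, rfl⟩ := isOpen_induced_iff.mp hV'
  -- work downstairs in `X`
  have hMUclosed : IsClosed (M \ U) := hMclosed.sdiff hUopen
  have hDclosed : IsClosed (↑(lowerClosure (M \ U)) : Set X) :=
    hX.1.isClosed_lowerClosure hMUclosed
  set W : Set X := (↑(lowerClosure (M \ U)) : Set X)ᶜ with hW
  have hWopen : IsOpen W := hDclosed.isOpen_compl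
  have hWup : IsUpperSet W := (lowerClosure (M \ U)).lower.compl
  have hclW : IsClopen (closure W) := hE W hWopen hWup
  have hclWup : IsUpperSet (closure W) := hX.isUpperSet_closure hWup
  -- `U ∩ M ⊆ W`
  have key1 : U ∩ M ⊆ W := by
    rintro v ⟨hvU, hvM⟩ hv
    obtain ⟨z, hz, hvz⟩ := mem_lowerClosure.mp hv
    exact hz.2 ((hvM z hvz) ▸ hvU)
  -- `W ∩ M ⊆ U ∩ M`
  have key2 : W ∩ M ⊆ U ∩ M := by
    rintro m ⟨hmW, hmM⟩
    refine ⟨?_, hmM⟩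
    by_contra hmU
    exact hmW (subset_lowerClosure ⟨hmM, hmU⟩)
  -- `closure W ∩ M ⊆ closure (U ∩ M)`
  have key3 : ∀ m ∈ M, m ∈ closure W → m ∈ closure (U ∩ M) := by
    intro m hmM hmcl
    rw [mem_closure_iff]
    intro O hOopen hmO
    obtain ⟨A, hA, hmA, hAO⟩ := compact_exists_isClopen_in_isOpen hOopen hmO
    have hD' : IsClopen (↑(lowerClosure (closure W \ A)) : Set X) :=
      hX.2 _ (hclW.diff hA)
    have hmD' : m ∉ (↑(lowerClosure (closure W \ A)) : Set X) := by
      intro h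
      obtain ⟨z, hz, hmz⟩ := mem_lowerClosure.mp h
      exact hz.2 ((hmM z hmz) ▸ hmA)
    set N : Set X := (A ∩ closure W) \ (↑(lowerClosure (closure W \ A)) : Set X) with hN
    have hNopen : IsOpen N := (hA.isOpen.inter hclW.isOpen).sdiff hD'.isClosed
    have hmN : m ∈ N := ⟨⟨hmA, hmcl⟩, hmD'⟩
    obtain ⟨x, hxN, hxW⟩ := mem_closure_iff.mp hmcl N hNopen hmN
    obtain ⟨y, hxy, hyM⟩ := hX.1.exists_max x
    have hyW : y ∈ W := hWup hxy hxW
    have hyUM : y ∈ U ∩ M := key2 ⟨hyW, hyM⟩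
    have hyA : y ∈ A := by
      by_contra hyA
      exact hxN.2 (mem_lowerClosure.mpr ⟨y, ⟨subset_closure hyW, hyA⟩, hxy⟩)
    exact ⟨y, hAO hyA, hyUM⟩
  -- now transfer to the subtype
  have hcleq : closure ((Subtype.val : { x : X // ∀ y : X, x ≤ y → y = x } → X) ⁻¹' U) =
      Subtype.val ⁻¹' (closure W) := by
    rw [Topology.IsEmbedding.subtypeVal.closure_eq_preimage_closure_image]
    have himg : ((Subtype.val : { x : X // ∀ y : X, x ≤ y → y = x } → X) ''
        (Subtype.val ⁻¹' U)) = M ∩ U := by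
      ext z
      constructor
      · rintro ⟨⟨w, hw⟩, hwU, rfl⟩
        exact ⟨hw, hwU⟩
      · rintro ⟨hz, hzU⟩
        exact ⟨⟨z, hz⟩, hzU, rfl⟩
    ext ⟨x, hx⟩
    simp only [mem_preimage]
    rw [himg]
    constructor
    · intro h
      exact closure_mono key1 (by rwa [inter_comm] at h)
    · intro h
      have := key3 x hx h
      rwa [inter_comm] at this
  rw [hcleq]
  exact hclW.isOpen.preimage continuous_subtype_val
end

section
/- For any set X with |X| > 1, the free Heyting algebra on X generators is not a complete lattice. -/
universe u
namespace FHNC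

inductive Pt : Type u
  | m1 | m2
  | x : ULift ℕ → Pt
  | c : ULift ℕ → Pt
  | d : ULift ℕ → Pt
  | z : ULift ℕ → Pt

namespace Pt

def ple : Pt.{u} → Pt.{u} → Prop
  | .m1, b => b = .m1
  | .m2, b => b = .m2
  | .x _, .m1 => True
  | .x n, .m2 => 1 ≤ n.down
  | .x n, .x m => m.down ≤ n.down
  | .x n, .c m => m.down + 1 < n.down
  | .x n, .d m => m.down < n.down
  | .x _, .z _ => False
  | .c n, .m1 => 1 ≤ n.down
  | .c _, .m2 => True
  | .c n, .x m => m.down + 1 < n.down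
  | .c n, .c m => m.down ≤ n.down
  | .c n, .d m => m.down < n.down
  | .c _, .z _ => False
  | .d _, .m1 => True
  | .d _, .m2 => True
  | .d n, .x m => m.down < n.down
  | .d n, .c m => m.down < n.down
  | .d n, .d m => m.down ≤ n.down
  | .d _, .z _ => False
  | .z _, .m1 => True
  | .z _, .m2 => True
  | .z n, .x m => m.down ≤ n.down
  | .z n, .c m => m.down ≤ n.down
  | .z n, .d m => m.down < n.down
  | .z n, .z m => m.down = n.down

instance : PartialOrder Pt.{u} where
  le := ple
  le_refl a := by cases a <;> simp only [ple] <;> omega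
  le_trans a b c hab hbc := by
    cases a <;> cases b <;> cases c <;>
      simp_all only [ple, ULift.ext_iff] <;> first | trivial | omega
  le_antisymm a b hab hba := by
    cases a <;> cases b <;> simp_all only [ple, ULift.ext_iff] <;> first | trivial | omega | exact hba | exact hab | (congr 1; exact ULift.ext _ _ (by omega))

end Pt

def Up : Type u := {S : Set Pt.{u} // IsUpperSet S}

namespace Up

instance : Membership Pt.{u} Up.{u} := ⟨fun S y => y ∈ S.1⟩

theorem mem_def {y : Pt.{u}} {S : Up.{u}} : y ∈ S ↔ y ∈ S.1 := Iff.rfl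

instance : PartialOrder Up.{u} where
  le S T := ∀ ⦃y⦄, y ∈ S → y ∈ T
  le_refl S := fun _ h => h
  le_trans S T U h1 h2 := fun _ h => h2 (h1 h)
  le_antisymm S T h1 h2 := Subtype.ext (Set.Subset.antisymm (fun _ h => h1 h) (fun _ h => h2 h))

theorem le_def {S T : Up.{u}} : S ≤ T ↔ ∀ ⦃y⦄, y ∈ S → y ∈ T := Iff.rfl

instance : HeytingAlgebra Up.{u} where
  sup S T := ⟨S.1 ∪ T.1, S.2.union T.2⟩
  inf S T := ⟨S.1 ∩ T.1, S.2.inter T.2⟩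
  le_sup_left S T := fun _ h => Or.inl h
  le_sup_right S T := fun _ h => Or.inr h
  sup_le S T U h1 h2 := fun _ h => h.elim (fun hy => h1 hy) (fun hy => h2 hy)
  inf_le_left S T := fun _ h => h.1
  inf_le_right S T := fun _ h => h.2
  le_inf S T U h1 h2 := fun _ h => ⟨h1 h, h2 h⟩
  top := ⟨Set.univ, isUpperSet_univ⟩
  le_top S := fun _ _ => trivial
  bot := ⟨∅, isUpperSet_empty⟩
  bot_le S := fun _ h => h.elim
  himp S T := ⟨{y | ∀ ⦃y'⦄, y ≤ y' → y' ∈ S.1 → y' ∈ T.1},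
    fun a b hab ha y' hb hy' => ha (le_trans hab hb) hy'⟩
  le_himp_iff S T U := by
    constructor
    · intro h y hy
      exact h hy.1 (le_refl y) hy.2
    · intro h y hy y' hle hy'
      exact h ⟨S.2 hle hy, hy'⟩
  compl S := ⟨{y | ∀ ⦃y'⦄, y ≤ y' → y' ∈ S.1 → False},
    fun a b hab ha y' hb hy' => ha (le_trans hab hb) hy'⟩
  himp_bot S := rfl

theorem mem_himp {y : Pt.{u}} {S T : Up.{u}} :
    y ∈ S ⇨ T ↔ ∀ ⦃y'⦄, y ≤ y' → y' ∈ S → y' ∈ T := Iff.rfl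

theorem mem_sup {y : Pt.{u}} {S T : Up.{u}} : y ∈ S ⊔ T ↔ y ∈ S ∨ y ∈ T := Iff.rfl
theorem mem_inf {y : Pt.{u}} {S T : Up.{u}} : y ∈ S ⊓ T ↔ y ∈ S ∧ y ∈ T := Iff.rfl
theorem mem_top {y : Pt.{u}} : y ∈ (⊤ : Up.{u}) := trivial
theorem not_mem_bot {y : Pt.{u}} : ¬ y ∈ (⊥ : Up.{u}) := fun h => h

end Up
section Formulas
variable {α : Type*} [HeytingAlgebra α] {β : Type*} [HeytingAlgebra β]

/-- simultaneous recursion for the three ladder-row characteristic formulas -/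
def seq3 (p q : α) : ℕ → α × α × α
  | 0 => (q ⇨ ⊥, p ⇨ ⊥, ((q ⇨ ⊥) ⊔ (p ⇨ ⊥)) ⇨ ((p ⊓ (q ⇨ ⊥)) ⊔ (q ⊓ (p ⇨ ⊥))))
  | n+1 =>
    let t := seq3 p q n
    let g' := t.2.1 ⇨ (t.1 ⊔ t.2.2)
    let h' := t.1 ⇨ (t.2.1 ⊔ t.2.2)
    (g', h', (g' ⊔ h') ⇨ ((t.1 ⊔ t.2.1) ⊔ t.2.2))

def fG (p q : α) (n : ℕ) : α := (seq3 p q n).1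
def fH (p q : α) (n : ℕ) : α := (seq3 p q n).2.1
def fK (p q : α) (n : ℕ) : α := (seq3 p q n).2.2
def fR (p q : α) (n : ℕ) : α := fG p q n ⊔ fH p q n
def fU (p q : α) (n : ℕ) : α := (fK p q n ⇨ fR p q n) ⇨ fR p q n
def fW (p q : α) : ℕ → α
  | 0 => ⊤
  | n+1 => fW p q n ⊓ fU p q n
def fg (p q : α) (n : ℕ) : α := fK p q n ⊓ fW p q n

theorem fG_succ (p q : α) (n : ℕ) :
    fG p q (n+1) = fH p q n ⇨ (fG p q n ⊔ fK p q n) := rfl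
theorem fH_succ (p q : α) (n : ℕ) :
    fH p q (n+1) = fG p q n ⇨ (fH p q n ⊔ fK p q n) := rfl
theorem fK_succ (p q : α) (n : ℕ) :
    fK p q (n+1) = (fG p q (n+1) ⊔ fH p q (n+1)) ⇨ ((fG p q n ⊔ fH p q n) ⊔ fK p q n) := rfl

theorem fK_mono (p q : α) (n : ℕ) : fK p q n ≤ fK p q (n+1) := by
  rw [fK_succ, le_himp_iff]
  exact inf_le_left.trans le_sup_right

theorem fK_le (p q : α) {n k : ℕ} (h : n ≤ k) : fK p q n ≤ fK p q k := by
  induction k with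
  | zero => simp_all
  | succ k ih =>
    rcases Nat.lt_or_ge n (k+1) with h' | h'
    · exact (ih (by omega)).trans (fK_mono p q k)
    · have : n = k+1 := by omega
      subst this; exact le_refl _

theorem fK_le_fU (p q : α) (k : ℕ) : fK p q k ≤ fU p q k := by
  rw [fU, le_himp_iff]
  exact inf_himp_le

theorem fW_le_fU (p q : α) {j n : ℕ} (h : j < n) : fW p q n ≤ fU p q j := by
  induction n with
  | zero => omega
  | succ n ih =>
    rcases Nat.lt_or_ge j n with h' | h'
    · exact inf_le_left.trans (ih h')
    · have : j = n := by omega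
      subst this; exact inf_le_right

theorem fg_le_fU (p q : α) (n k : ℕ) : fg p q n ≤ fU p q k := by
  rcases Nat.lt_or_ge k n with h | h
  · exact inf_le_right.trans (fW_le_fU p q h)
  · exact inf_le_left.trans ((fK_le p q h).trans (fK_le_fU p q k))

variable (φ : HeytingHom α β)

theorem map_seq3 (p q : α) (n : ℕ) :
    φ (fG p q n) = fG (φ p) (φ q) n ∧ φ (fH p q n) = fH (φ p) (φ q) n ∧
      φ (fK p q n) = fK (φ p) (φ q) n := by
  induction n with
  | zero =>
    refine ⟨?_, ?_, ?_⟩ <;>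
      simp [fG, fH, fK, seq3, map_himp, map_sup, map_inf, map_bot]
  | succ n ih =>
    obtain ⟨h1, h2, h3⟩ := ih
    refine ⟨?_, ?_, ?_⟩
    · rw [fG_succ, fG_succ, map_himp, map_sup, h1, h2, h3]
    · rw [fH_succ, fH_succ, map_himp, map_sup, h1, h2, h3]
    · have g1 : φ (fG p q (n+1)) = fG (φ p) (φ q) (n+1) := by
        rw [fG_succ, fG_succ, map_himp, map_sup, h1, h2, h3]
      have g2 : φ (fH p q (n+1)) = fH (φ p) (φ q) (n+1) := by
        rw [fH_succ, fH_succ, map_himp, map_sup, h1, h2, h3]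
      rw [fK_succ, fK_succ, map_himp, map_sup, map_sup, map_sup, g1, g2, h1, h2, h3]

theorem map_fU (p q : α) (k : ℕ) : φ (fU p q k) = fU (φ p) (φ q) k := by
  obtain ⟨h1, h2, h3⟩ := map_seq3 φ p q k
  rw [fU, fU, map_himp, map_himp, fR, fR, map_sup, h1, h2, h3]

theorem map_fg (p q : α) (n : ℕ) : φ (fg p q n) = fg (φ p) (φ q) n := by
  have hw : ∀ m, φ (fW p q m) = fW (φ p) (φ q) m := by
    intro m; induction m with
    | zero => simp [fW, map_top]
    | succ m ih => rw [fW, fW, map_inf, ih, map_fU]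
  rw [fg, fg, map_inf, hw, (map_seq3 φ p q n).2.2]

end Formulas

namespace Model

open Pt

abbrev pX (n : ℕ) : Pt.{u} := Pt.x ⟨n⟩
abbrev pC (n : ℕ) : Pt.{u} := Pt.c ⟨n⟩
abbrev pD (n : ℕ) : Pt.{u} := Pt.d ⟨n⟩
abbrev pZ (n : ℕ) : Pt.{u} := Pt.z ⟨n⟩

theorem le_iff_ple {a b : Pt.{u}} : a ≤ b ↔ ple a b := Iff.rfl

def UP : Up.{u} := ⟨{y | y = Pt.m1}, fun a b hab ha => by
  simp only [Set.mem_setOf_eq] at *; subst ha; exact hab⟩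
def UQ : Up.{u} := ⟨{y | y = Pt.m2}, fun a b hab ha => by
  simp only [Set.mem_setOf_eq] at *; subst ha; exact hab⟩

theorem mem_UP {y : Pt.{u}} : y ∈ UP ↔ y = Pt.m1 := Iff.rfl
theorem mem_UQ {y : Pt.{u}} : y ∈ UQ ↔ y = Pt.m2 := Iff.rfl

noncomputable def VG (n : ℕ) : Up.{u} := fG UP UQ n
noncomputable def VH (n : ℕ) : Up.{u} := fH UP UQ n
noncomputable def VK (n : ℕ) : Up.{u} := fK UP UQ n

theorem VG_zero : VG 0 = UQ ⇨ (⊥ : Up.{u}) := rfl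
theorem VH_zero : VH 0 = UP ⇨ (⊥ : Up.{u}) := rfl
theorem VK_zero : VK 0 = (VG 0 ⊔ VH 0) ⇨ ((UP ⊓ VG 0) ⊔ (UQ ⊓ VH 0)) := by
  show fK UP UQ 0 = _
  rw [fK]
  rfl

theorem VG_succ (n : ℕ) : VG (n+1) = VH n ⇨ (VG n ⊔ VK n) := rfl
theorem VH_succ (n : ℕ) : VH (n+1) = VG n ⇨ (VH n ⊔ VK n) := rfl
theorem VK_succ (n : ℕ) : VK (n+1) = (VG (n+1) ⊔ VH (n+1)) ⇨ ((VG n ⊔ VH n) ⊔ VK n) := rfl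

def tG (n : ℕ) : Pt.{u} → Prop
  | .m1 => True
  | .m2 => 1 ≤ n
  | .x m => m.down ≤ n
  | .c m => m.down + 1 < n
  | .d m => m.down < n
  | .z m => m.down + 2 ≤ n

def tH (n : ℕ) : Pt.{u} → Prop
  | .m1 => 1 ≤ n
  | .m2 => True
  | .x m => m.down + 1 < n
  | .c m => m.down ≤ n
  | .d m => m.down < n
  | .z m => m.down + 2 ≤ n

def tK (n : ℕ) : Pt.{u} → Prop
  | .m1 => True
  | .m2 => True
  | .x m => m.down < n
  | .c m => m.down < n
  | .d m => m.down ≤ n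
  | .z m => m.down < n

theorem mem_VG_zero {y : Pt.{u}} : y ∈ VG 0 ↔ ¬ y ≤ Pt.m2 := by
  rw [VG_zero, Up.mem_himp]
  constructor
  · intro h hle
    exact Up.not_mem_bot (h hle rfl)
  · intro hn y' hle hy'
    rw [mem_UQ] at hy'
    exact absurd (hy' ▸ hle) hn

theorem mem_VH_zero {y : Pt.{u}} : y ∈ VH 0 ↔ ¬ y ≤ Pt.m1 := by
  rw [VH_zero, Up.mem_himp]
  constructor
  · intro h hle
    exact Up.not_mem_bot (h hle rfl)
  · intro hn y' hle hy'
    rw [mem_UP] at hy'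
    exact absurd (hy' ▸ hle) hn

theorem mem_VK_zero {y : Pt.{u}} : y ∈ VK 0 ↔ (¬ y ≤ pX 0 ∧ ¬ y ≤ pC 0) := by
  rw [VK_zero, Up.mem_himp]
  constructor
  · intro h
    constructor
    · intro hle
      have hx : (pX 0 : Pt.{u}) ∈ VG 0 ⊔ VH 0 := by
        rw [Up.mem_sup]
        left
        rw [mem_VG_zero, le_iff_ple]
        dsimp [ple]
        omega
      have := h hle hx
      rw [Up.mem_sup, Up.mem_inf, Up.mem_inf, mem_UP, mem_UQ] at this
      rcases this with ⟨h1, _⟩ | ⟨h1, _⟩ <;> exact absurd h1 (by simp)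
    · intro hle
      have hx : (pC 0 : Pt.{u}) ∈ VG 0 ⊔ VH 0 := by
        rw [Up.mem_sup]
        right
        rw [mem_VH_zero, le_iff_ple]
        dsimp [ple]
        omega
      have := h hle hx
      rw [Up.mem_sup, Up.mem_inf, Up.mem_inf, mem_UP, mem_UQ] at this
      rcases this with ⟨h1, _⟩ | ⟨h1, _⟩ <;> exact absurd h1 (by simp)
  · rintro ⟨h1, h2⟩ y' hle hy'
    rw [Up.mem_sup, mem_VG_zero, mem_VH_zero] at hy'
    rw [Up.mem_sup, Up.mem_inf, Up.mem_inf, mem_UP, mem_UQ, mem_VG_zero, mem_VH_zero]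
    cases y' with
    | m1 => exact Or.inl ⟨rfl, by rw [le_iff_ple]; dsimp [ple]; simp⟩
    | m2 => exact Or.inr ⟨rfl, by rw [le_iff_ple]; dsimp [ple]; simp⟩
    | x a =>
      obtain ⟨m⟩ := a
      exfalso
      rcases hy' with h' | h'
      · rw [le_iff_ple] at h'
        dsimp [ple] at h'
        have hm : m = 0 := by omega
        subst hm
        exact h1 hle
      · rw [le_iff_ple] at h'
        dsimp [ple] at h'
        exact h' trivial
    | c a =>
      obtain ⟨m⟩ := a
      exfalso
      rcases hy' with h' | h'
      · rw [le_iff_ple] at h'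
        dsimp [ple] at h'
        exact h' trivial
      · rw [le_iff_ple] at h'
        dsimp [ple] at h'
        have hm : m = 0 := by omega
        subst hm
        exact h2 hle
    | d a =>
      exfalso
      rcases hy' with h' | h' <;> (rw [le_iff_ple] at h'; dsimp [ple] at h'; exact h' trivial)
    | z a =>
      exfalso
      rcases hy' with h' | h' <;> (rw [le_iff_ple] at h'; dsimp [ple] at h'; exact h' trivial)

theorem tables (n : ℕ) :
    ∀ y : Pt.{u}, (y ∈ VG n ↔ tG n y) ∧ (y ∈ VH n ↔ tH n y) ∧ (y ∈ VK n ↔ tK n y) := by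
  induction n with
  | zero =>
    intro y
    refine ⟨?_, ?_, ?_⟩
    · rw [mem_VG_zero, le_iff_ple]
      cases y with
      | m1 => dsimp [ple, tG]; simp
      | m2 => dsimp [ple, tG]; simp
      | x a => obtain ⟨m⟩ := a; dsimp [ple, tG]; omega
      | c a => obtain ⟨m⟩ := a; dsimp [ple, tG]; simp
      | d a => obtain ⟨m⟩ := a; dsimp [ple, tG]; simp
      | z a => obtain ⟨m⟩ := a; dsimp [ple, tG]; simp
    · rw [mem_VH_zero, le_iff_ple]
      cases y with
      | m1 => dsimp [ple, tH]; simp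
      | m2 => dsimp [ple, tH]; simp
      | x a => obtain ⟨m⟩ := a; dsimp [ple, tH]; simp
      | c a => obtain ⟨m⟩ := a; dsimp [ple, tH]; omega
      | d a => obtain ⟨m⟩ := a; dsimp [ple, tH]; simp
      | z a => obtain ⟨m⟩ := a; dsimp [ple, tH]; simp
    · rw [mem_VK_zero, le_iff_ple, le_iff_ple]
      cases y with
      | m1 => dsimp [ple, tK]; simp
      | m2 => dsimp [ple, tK]; simp
      | x a => obtain ⟨m⟩ := a; dsimp [ple, tK]; omega
      | c a => obtain ⟨m⟩ := a; dsimp [ple, tK]; omega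
      | d a => obtain ⟨m⟩ := a; dsimp [ple, tK]; omega
      | z a => obtain ⟨m⟩ := a; dsimp [ple, tK]; omega
  | succ n ih =>
    have hG : ∀ y : Pt.{u}, y ∈ VG n ↔ tG n y := fun y => (ih y).1
    have hH : ∀ y : Pt.{u}, y ∈ VH n ↔ tH n y := fun y => (ih y).2.1
    have hK : ∀ y : Pt.{u}, y ∈ VK n ↔ tK n y := fun y => (ih y).2.2
    have memG : ∀ y : Pt.{u}, y ∈ VG (n+1) ↔ ¬ y ≤ pC n := by
      intro y
      rw [VG_succ, Up.mem_himp]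
      constructor
      · intro h hle
        have hc : (pC n : Pt.{u}) ∈ VH n := (hH (pC n)).mpr (by dsimp [tH]; omega)
        have := h hle hc
        simp only [Up.mem_sup, hG, hK] at this
        dsimp [tG, tK] at this
        omega
      · intro hn y' hle hy'
        rw [hH y'] at hy'
        simp only [Up.mem_sup, hG, hK]
        cases y' with
        | m1 => exact Or.inl trivial
        | m2 => exact Or.inr trivial
        | x a => obtain ⟨m⟩ := a; dsimp [tH] at hy'; dsimp [tG, tK]; omega
        | d a => obtain ⟨m⟩ := a; dsimp [tH] at hy'; dsimp [tG, tK]; omega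
        | z a => obtain ⟨m⟩ := a; dsimp [tH] at hy'; dsimp [tG, tK]; omega
        | c a =>
          obtain ⟨m⟩ := a
          by_cases hm : m = n
          · subst hm; exact absurd hle hn
          · dsimp [tH] at hy'; dsimp [tG, tK]; omega
    have memH : ∀ y : Pt.{u}, y ∈ VH (n+1) ↔ ¬ y ≤ pX n := by
      intro y
      rw [VH_succ, Up.mem_himp]
      constructor
      · intro h hle
        have hc : (pX n : Pt.{u}) ∈ VG n := (hG (pX n)).mpr (by dsimp [tG]; omega)
        have := h hle hc
        simp only [Up.mem_sup, hH, hK] at this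
        dsimp [tH, tK] at this
        omega
      · intro hn y' hle hy'
        rw [hG y'] at hy'
        simp only [Up.mem_sup, hH, hK]
        cases y' with
        | m1 => exact Or.inr trivial
        | m2 => exact Or.inl trivial
        | c a => obtain ⟨m⟩ := a; dsimp [tG] at hy'; dsimp [tH, tK]; omega
        | d a => obtain ⟨m⟩ := a; dsimp [tG] at hy'; dsimp [tH, tK]; omega
        | z a => obtain ⟨m⟩ := a; dsimp [tG] at hy'; dsimp [tH, tK]; omega
        | x a =>
          obtain ⟨m⟩ := a
          by_cases hm : m = n
          · subst hm; exact absurd hle hn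
          · dsimp [tG] at hy'; dsimp [tH, tK]; omega
    have memK : ∀ y : Pt.{u}, y ∈ VK (n+1) ↔ (¬ y ≤ pX (n+1) ∧ ¬ y ≤ pC (n+1)) := by
      intro y
      rw [VK_succ, Up.mem_himp]
      constructor
      · intro h
        constructor
        · intro hle
          have hx : (pX (n+1) : Pt.{u}) ∈ VG (n+1) ⊔ VH (n+1) := by
            rw [Up.mem_sup]
            exact Or.inl ((memG _).mpr (by rw [le_iff_ple]; dsimp [ple]; omega))
          have := h hle hx
          simp only [Up.mem_sup, hG, hH, hK] at this
          dsimp [tG, tH, tK] at this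
          omega
        · intro hle
          have hx : (pC (n+1) : Pt.{u}) ∈ VG (n+1) ⊔ VH (n+1) := by
            rw [Up.mem_sup]
            exact Or.inr ((memH _).mpr (by rw [le_iff_ple]; dsimp [ple]; omega))
          have := h hle hx
          simp only [Up.mem_sup, hG, hH, hK] at this
          dsimp [tG, tH, tK] at this
          omega
      · rintro ⟨h1, h2⟩ y' hle hy'
        simp only [Up.mem_sup, memG, memH, le_iff_ple] at hy'
        simp only [Up.mem_sup, hG, hH, hK]
        cases y' with
        | m1 => exact Or.inl (Or.inl trivial)
        | m2 => exact Or.inl (Or.inr trivial)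
        | d a => obtain ⟨m⟩ := a; dsimp [ple] at hy'; dsimp [tG, tH, tK]; omega
        | z a => obtain ⟨m⟩ := a; dsimp [ple] at hy'; dsimp [tG, tH, tK]; omega
        | x a =>
          obtain ⟨m⟩ := a
          by_cases hm : m = n+1
          · subst hm; exact absurd hle h1
          · dsimp [ple] at hy'; dsimp [tG, tH, tK]; omega
        | c a =>
          obtain ⟨m⟩ := a
          by_cases hm : m = n+1
          · subst hm; exact absurd hle h2
          · dsimp [ple] at hy'; dsimp [tG, tH, tK]; omega
    intro y
    refine ⟨?_, ?_, ?_⟩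
    · rw [memG, le_iff_ple]
      cases y with
      | m1 => dsimp [ple, tG]; simp
      | m2 => dsimp [ple, tG]; simp [tG]
      | x a => obtain ⟨m⟩ := a; dsimp [ple, tG]; omega
      | c a => obtain ⟨m⟩ := a; dsimp [ple, tG]; omega
      | d a => obtain ⟨m⟩ := a; dsimp [ple, tG]; omega
      | z a => obtain ⟨m⟩ := a; dsimp [ple, tG]; omega
    · rw [memH, le_iff_ple]
      cases y with
      | m1 => dsimp [ple, tH]; simp [tH]
      | m2 => dsimp [ple, tH]; simp
      | x a => obtain ⟨m⟩ := a; dsimp [ple, tH]; omega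
      | c a => obtain ⟨m⟩ := a; dsimp [ple, tH]; omega
      | d a => obtain ⟨m⟩ := a; dsimp [ple, tH]; omega
      | z a => obtain ⟨m⟩ := a; dsimp [ple, tH]; omega
    · rw [memK, le_iff_ple, le_iff_ple]
      cases y with
      | m1 => dsimp [ple, tK]; simp
      | m2 => dsimp [ple, tK]; simp
      | x a => obtain ⟨m⟩ := a; dsimp [ple, tK]; omega
      | c a => obtain ⟨m⟩ := a; dsimp [ple, tK]; omega
      | d a => obtain ⟨m⟩ := a; dsimp [ple, tK]; omega
      | z a => obtain ⟨m⟩ := a; dsimp [ple, tK]; omega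

noncomputable def VR (k : ℕ) : Up.{u} := VG k ⊔ VH k
noncomputable def VU (k : ℕ) : Up.{u} := fU UP UQ k

theorem VU_eq (k : ℕ) : VU k = (VK k ⇨ VR k) ⇨ VR k := rfl

theorem pZ_not_mem_VR (k : ℕ) : (pZ k : Pt.{u}) ∉ VR k := by
  intro hmem
  rw [VR, Up.mem_sup, (tables k _).1, (tables k _).2.1] at hmem
  dsimp [tG, tH] at hmem
  omega

theorem pZ_mem_phiZ (k : ℕ) : (pZ k : Pt.{u}) ∈ VK k ⇨ VR k := by
  rw [Up.mem_himp]
  intro y' hle hy'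
  rw [(tables k _).2.2] at hy'
  rw [VR, Up.mem_sup, (tables k _).1, (tables k _).2.1]
  rw [le_iff_ple] at hle
  cases y' with
  | m1 => exact Or.inl trivial
  | m2 => exact Or.inr trivial
  | x a => obtain ⟨m⟩ := a; dsimp [ple] at hle; dsimp [tK] at hy'; dsimp [tG, tH]; omega
  | c a => obtain ⟨m⟩ := a; dsimp [ple] at hle; dsimp [tK] at hy'; dsimp [tG, tH]; omega
  | d a => obtain ⟨m⟩ := a; dsimp [ple] at hle; dsimp [tK] at hy'; dsimp [tG, tH]; omega
  | z a => obtain ⟨m⟩ := a; dsimp [ple] at hle; dsimp [tK] at hy'; dsimp [tG, tH]; omega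

/-- (S2) -/
theorem pZ_not_mem_VU (k : ℕ) : (pZ k : Pt.{u}) ∉ VU k := by
  intro hmem
  rw [VU_eq, Up.mem_himp] at hmem
  exact pZ_not_mem_VR k (hmem (le_refl _) (pZ_mem_phiZ k))

theorem pD_not_mem_VR (j : ℕ) : (pD j : Pt.{u}) ∉ VR j := by
  intro hmem
  rw [VR, Up.mem_sup, (tables j _).1, (tables j _).2.1] at hmem
  dsimp [tG, tH] at hmem
  omega

theorem pD_mem_VK (j : ℕ) : (pD j : Pt.{u}) ∈ VK j := by
  rw [(tables j _).2.2]; dsimp [tK]; omega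

/-- key: every non-`z` point satisfying `VK j ⇨ VR j` lies in `VR j` -/
theorem mem_VR_of_mem_phiZ {j : ℕ} {y : Pt.{u}} (hy : y ∈ VK j ⇨ VR j)
    (hz : ∀ m : ℕ, y ≠ pZ m) : y ∈ VR j := by
  by_contra hnot
  have hle : y ≤ pD j := by
    rw [VR, Up.mem_sup, (tables j _).1, (tables j _).2.1] at hnot
    rw [le_iff_ple]
    cases y with
    | m1 => exact absurd (Or.inl trivial) hnot
    | m2 => exact absurd (Or.inr trivial) hnot
    | x a => obtain ⟨m⟩ := a; dsimp [tG, tH] at hnot; dsimp [ple]; omega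
    | c a => obtain ⟨m⟩ := a; dsimp [tG, tH] at hnot; dsimp [ple]; omega
    | d a => obtain ⟨m⟩ := a; dsimp [tG, tH] at hnot; dsimp [ple]; omega
    | z a => obtain ⟨m⟩ := a; exact absurd rfl (hz m)
  exact pD_not_mem_VR j (hy hle (pD_mem_VK j))

theorem pD_mem_VU (j n : ℕ) : (pD n : Pt.{u}) ∈ VU j := by
  rw [VU_eq, Up.mem_himp]
  intro y' hle hy'
  refine mem_VR_of_mem_phiZ hy' ?_
  intro m hm
  rw [le_iff_ple] at hle
  subst hm
  dsimp [ple] at hle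

/-- (S1) -/
theorem pD_mem_fg (n : ℕ) : (pD n : Pt.{u}) ∈ fg UP UQ n := by
  have hW : ∀ m : ℕ, (pD n : Pt.{u}) ∈ fW UP UQ m := by
    intro m
    induction m with
    | zero => exact Up.mem_top
    | succ m ih => exact ⟨ih, pD_mem_VU m n⟩
  exact ⟨pD_mem_VK n, hW n⟩

/-! ### the invariant -/

def Phi (V : Up.{u}) : Prop := ∃ N : ℕ, ∀ k : ℕ, N ≤ k → ((pZ k : Pt.{u}) ∈ V ↔ (pD (k+1) : Pt.{u}) ∈ V)

theorem Phi_bot : Phi (⊥ : Up.{u}) := ⟨0, fun _ _ => by constructor <;> (intro h; exact absurd h Up.not_mem_bot)⟩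
theorem Phi_top : Phi (⊤ : Up.{u}) := ⟨0, fun _ _ => by simp [Up.mem_top]⟩
theorem Phi_UP : Phi (UP : Up.{u}) := ⟨0, fun _ _ => by
  rw [mem_UP, mem_UP]; constructor <;> (intro h; cases h)⟩
theorem Phi_UQ : Phi (UQ : Up.{u}) := ⟨0, fun _ _ => by
  rw [mem_UQ, mem_UQ]; constructor <;> (intro h; cases h)⟩

theorem Phi_inf {V W : Up.{u}} (hV : Phi V) (hW : Phi W) : Phi (V ⊓ W) := by
  obtain ⟨N1, h1⟩ := hV
  obtain ⟨N2, h2⟩ := hW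
  exact ⟨max N1 N2, fun k hk => by
    rw [Up.mem_inf, Up.mem_inf, h1 k (le_trans (le_max_left _ _) hk),
      h2 k (le_trans (le_max_right _ _) hk)]⟩

theorem Phi_sup {V W : Up.{u}} (hV : Phi V) (hW : Phi W) : Phi (V ⊔ W) := by
  obtain ⟨N1, h1⟩ := hV
  obtain ⟨N2, h2⟩ := hW
  exact ⟨max N1 N2, fun k hk => by
    rw [Up.mem_sup, Up.mem_sup, h1 k (le_trans (le_max_left _ _) hk),
      h2 k (le_trans (le_max_right _ _) hk)]⟩

/-- order fact: anything strictly above `z k` is above `d (k+1)` -/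
theorem le_pD_of_strict {k : ℕ} {y : Pt.{u}} (hle : pZ k ≤ y) (hne : y ≠ pZ k) :
    pD (k+1) ≤ y := by
  rw [le_iff_ple] at hle ⊢
  cases y with
  | m1 => dsimp [ple]
  | m2 => dsimp [ple]
  | x a => obtain ⟨m⟩ := a; dsimp [ple] at hle ⊢; omega
  | c a => obtain ⟨m⟩ := a; dsimp [ple] at hle ⊢; omega
  | d a => obtain ⟨m⟩ := a; dsimp [ple] at hle ⊢; omega
  | z a =>
    obtain ⟨m⟩ := a
    dsimp [ple] at hle
    exact absurd (by rw [hle] : (Pt.z ⟨m⟩ : Pt.{u}) = pZ k) hne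

/-- order fact: anything above `d (k+1)` is strictly above `z (k+2)` -/
theorem strict_of_le_pD {k : ℕ} {y : Pt.{u}} (hle : pD (k+1) ≤ y) :
    pZ (k+2) ≤ y ∧ y ≠ pZ (k+2) := by
  rw [le_iff_ple] at hle
  constructor
  · rw [le_iff_ple]
    cases y with
    | m1 => dsimp [ple]
    | m2 => dsimp [ple]
    | x a => obtain ⟨m⟩ := a; dsimp [ple] at hle ⊢; omega
    | c a => obtain ⟨m⟩ := a; dsimp [ple] at hle ⊢; omega
    | d a => obtain ⟨m⟩ := a; dsimp [ple] at hle ⊢; omega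
    | z a => obtain ⟨m⟩ := a; dsimp [ple] at hle
  · intro hy
    subst hy
    dsimp [ple] at hle

/-- order fact: strictly-above-`z` is monotone in the index -/
theorem strict_mono_z {k k' : ℕ} (hkk : k ≤ k') {y : Pt.{u}} (hle : pZ k ≤ y)
    (hne : y ≠ pZ k) : pZ k' ≤ y ∧ y ≠ pZ k' := by
  rw [le_iff_ple] at hle
  cases y with
  | m1 => exact ⟨by rw [le_iff_ple]; dsimp [ple], by intro h; cases h⟩
  | m2 => exact ⟨by rw [le_iff_ple]; dsimp [ple], by intro h; cases h⟩
  | x a =>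
    obtain ⟨m⟩ := a
    dsimp [ple] at hle
    exact ⟨by rw [le_iff_ple]; dsimp [ple]; omega, by intro h; cases h⟩
  | c a =>
    obtain ⟨m⟩ := a
    dsimp [ple] at hle
    exact ⟨by rw [le_iff_ple]; dsimp [ple]; omega, by intro h; cases h⟩
  | d a =>
    obtain ⟨m⟩ := a
    dsimp [ple] at hle
    exact ⟨by rw [le_iff_ple]; dsimp [ple]; omega, by intro h; cases h⟩
  | z a =>
    obtain ⟨m⟩ := a
    dsimp [ple] at hle
    exact absurd (by rw [hle] : (Pt.z ⟨m⟩ : Pt.{u}) = pZ k) hne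

theorem pZ_le_pD {m : ℕ} : (pZ (m+1) : Pt.{u}) ≤ pD m := by
  rw [le_iff_ple]; dsimp [ple]; omega

theorem pD_ne_pZ {m : ℕ} : (pD m : Pt.{u}) ≠ pZ (m+1) := by intro h; cases h

theorem Phi_himp {V W : Up.{u}} (hV : Phi V) (hW : Phi W) : Phi (V ⇨ W) := by
  obtain ⟨N1, h1⟩ := hV
  obtain ⟨N2, h2⟩ := hW
  by_cases hc : ∀ (k : ℕ) (y : Pt.{u}), pZ k ≤ y → y ≠ pZ k → y ∈ V → y ∈ W
  · -- all strict conditions hold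
    have hD : ∀ m : ℕ, (pD m : Pt.{u}) ∈ V ⇨ W := by
      intro m
      rw [Up.mem_himp]
      intro y' hle hy'
      rcases Nat.eq_zero_or_pos m with hm | hm
      · subst hm
        have hle1 : (pD (0+1) : Pt.{u}) ≤ y' :=
          le_trans (by rw [le_iff_ple]; dsimp [ple]; omega) hle
        have h3 := strict_of_le_pD hle1
        exact hc 2 y' h3.1 h3.2 hy'
      · obtain ⟨m', rfl⟩ : ∃ m', m = m' + 1 := ⟨m - 1, by omega⟩
        have h3 := strict_of_le_pD hle
        exact hc (m'+2) y' h3.1 h3.2 hy'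
    refine ⟨max N1 N2, fun k hk => ?_⟩
    have hzk : (pZ k : Pt.{u}) ∈ V ⇨ W := by
      rw [Up.mem_himp]
      intro y' hle hy'
      by_cases hy : y' = pZ k
      · subst hy
        -- self condition via pairing
        have hzV : (pZ k : Pt.{u}) ∈ V := hy'
        rw [h1 k (le_trans (le_max_left _ _) hk)] at hzV
        have hzW : (pD (k+1) : Pt.{u}) ∈ W :=
          (hD (k+1)) (le_refl _) hzV
        rw [← h2 k (le_trans (le_max_right _ _) hk)] at hzW
        exact hzW
      · exact hc k y' hle hy hy'
    constructor
    · intro _; exact hD (k+1)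
    · intro _; exact hzk
  · push_neg at hc
    obtain ⟨k0, y0, hley0, hney0, hy0V, hy0W⟩ := hc
    refine ⟨k0, fun k hk => ?_⟩
    have hstrict := strict_mono_z hk hley0 hney0
    constructor
    · intro hmem
      exfalso
      exact hy0W (hmem hstrict.1 hy0V)
    · intro hmem
      exfalso
      have hled : pD (k+1) ≤ y0 := le_pD_of_strict hstrict.1 hstrict.2
      exact hy0W (hmem hled hy0V)

end Model

section Generation

variable {X : Type u} {F : Type u} [HeytingAlgebra F]

/-- the Heyting subalgebra generated by the image of `i` -/
inductive Gen (i : X → F) : F → Prop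
  | gen (x : X) : Gen i (i x)
  | bot : Gen i ⊥
  | top : Gen i ⊤
  | sup {a b : F} : Gen i a → Gen i b → Gen i (a ⊔ b)
  | inf {a b : F} : Gen i a → Gen i b → Gen i (a ⊓ b)
  | himp {a b : F} : Gen i a → Gen i b → Gen i (a ⇨ b)

variable (i : X → F)

instance genSubHeyting : HeytingAlgebra {a : F // Gen i a} where
  le a b := a.1 ≤ b.1
  lt a b := a.1 < b.1
  lt_iff_le_not_ge a b := lt_iff_le_not_ge (a := a.1) (b := b.1)
  le_refl a := le_refl a.1
  le_trans a b c h1 h2 := le_trans h1 h2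
  le_antisymm a b h1 h2 := Subtype.ext (le_antisymm h1 h2)
  sup a b := ⟨a.1 ⊔ b.1, a.2.sup b.2⟩
  inf a b := ⟨a.1 ⊓ b.1, a.2.inf b.2⟩
  le_sup_left a b := le_sup_left (a := a.1) (b := b.1)
  le_sup_right a b := le_sup_right (a := a.1) (b := b.1)
  sup_le a b c := sup_le (a := a.1) (b := b.1) (c := c.1)
  inf_le_left a b := inf_le_left (a := a.1) (b := b.1)
  inf_le_right a b := inf_le_right (a := a.1) (b := b.1)
  le_inf a b c := le_inf (a := b.1) (b := c.1) (c := a.1)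
  top := ⟨⊤, Gen.top⟩
  le_top a := le_top (a := a.1)
  bot := ⟨⊥, Gen.bot⟩
  bot_le a := bot_le (a := a.1)
  himp a b := ⟨a.1 ⇨ b.1, a.2.himp b.2⟩
  le_himp_iff a b c := le_himp_iff (a := a.1) (b := b.1) (c := c.1)
  compl a := ⟨a.1 ⇨ ⊥, a.2.himp Gen.bot⟩
  himp_bot a := rfl

/-- inclusion of the generated subalgebra -/
def genIncl : HeytingHom {a : F // Gen i a} F where
  toFun a := a.1
  map_sup' a b := rfl
  map_inf' a b := rfl
  map_bot' := rfl
  map_himp' a b := rfl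

theorem gen_all
    (hfree : ∀ (H : Type u) [HeytingAlgebra H] (f : X → H),
      ∃! g : HeytingHom F H, ∀ x, g (i x) = f x) :
    ∀ a : F, Gen i a := by
  obtain ⟨e, he, -⟩ := hfree {a : F // Gen i a} (fun z => ⟨i z, Gen.gen z⟩)
  obtain ⟨g0, hg0, huniq⟩ := hfree F i
  have h1 : (genIncl i).comp e = g0 := huniq _ (by
    intro z
    show ((e (i z)) : {a : F // Gen i a}).1 = i z
    rw [he z])
  have h2 : HeytingHom.id F = g0 := huniq _ (fun z => rfl)
  intro a
  have : ((genIncl i).comp e) a = a := by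
    rw [h1, ← h2]; rfl
  have hval : (e a).1 = a := this
  exact hval ▸ (e a).2

end Generation

end FHNC

open FHNC FHNC.Model in
/-- The free Heyting algebra on a set `X` of generators with more than one element is
not a complete lattice. -/
theorem free_heyting_not_complete {X : Type u} {F : Type u} [HeytingAlgebra F]
    (i : X → F) (hX : Nontrivial X)
    (hfree : ∀ (H : Type u) [HeytingAlgebra H] (f : X → H),
      ∃! g : HeytingHom F H, ∀ x, g (i x) = f x) :
    ¬ ∀ S : Set F, ∃ a : F, IsLUB S a := by
  intro hcomplete
  obtain ⟨x, y, hxy⟩ := hX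
  set p : F := i x with hp_def
  set q : F := i y with hq_def
  -- the evaluation into the model
  classical
  obtain ⟨h, hh, -⟩ := hfree Up.{u} (fun w => if w = x then UP else if w = y then UQ else ⊥)
  have hp : h p = UP := by rw [hp_def, hh x]; simp
  have hq : h q = UQ := by
    rw [hq_def, hh y]
    simp [Ne.symm hxy, hxy]
  -- every element satisfies the invariant
  have hPhi : ∀ a : F, Phi (h a) := by
    intro a
    induction gen_all i hfree a with
    | gen z =>
      rw [hh z]
      by_cases h1 : z = x
      · rw [if_pos h1]; exact Phi_UP
      · by_cases h2 : z = y
        · rw [if_neg h1, if_pos h2]; exact Phi_UQ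
        · rw [if_neg h1, if_neg h2]; exact Phi_bot
    | bot => rw [map_bot]; exact Phi_bot
    | top => rw [map_top]; exact Phi_top
    | sup ha hb iha ihb => rw [map_sup]; exact Phi_sup iha ihb
    | inf ha hb iha ihb => rw [map_inf]; exact Phi_inf iha ihb
    | himp ha hb iha ihb => rw [map_himp]; exact Phi_himp iha ihb
  -- the witness family with no supremum
  obtain ⟨s, hs⟩ := hcomplete (Set.range (fun n => fg p q n))
  have hub : ∀ n, fg p q n ≤ s := fun n => hs.1 ⟨n, rfl⟩
  have hlub : ∀ k, s ≤ fU p q k := by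
    intro k
    refine hs.2 ?_
    rintro _ ⟨n, rfl⟩
    exact fg_le_fU p q n k
  -- pass to the model
  obtain ⟨N, hN⟩ := hPhi s
  have hD : (pD (N+1) : Pt.{u}) ∈ h s := by
    have h1 : h (fg p q (N+1)) ≤ h s := OrderHomClass.mono h (hub (N+1))
    have h2 : h (fg p q (N+1)) = fg UP UQ (N+1) := by
      rw [map_fg, hp, hq]
    exact h1 (h2 ▸ pD_mem_fg (N+1))
  have hZ : (pZ N : Pt.{u}) ∈ h s := (hN N (le_refl N)).mpr hD
  have hle : h s ≤ VU N := by
    have h1 : h s ≤ h (fU p q N) := OrderHomClass.mono h (hlub N)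
    have h2 : h (fU p q N) = fU UP UQ N := by rw [map_fU, hp, hq]
    show h s ≤ fU UP UQ N
    rw [← h2]; exact h1
  exact pZ_not_mem_VU N (hle hZ)
end

section
/- Let X be a Stone space, viewed as a Priestley space with the discrete order. For the Vietoris hyperspace V(X) with reverse-inclusion order, the set of maximal elements of V(X) is exactly the set of singletons, and for every clopen U ⊆ X, the pseudocomplement of [U] in the Heyting algebra ClopUp(V(X)) equals [X \ U]. Consequently every clopen upset of the form [U] is a regular element of ClopUp(V(X)). -/
open Set

/-- `[U] = {C ∈ V(X) : C ⊆ U}`. -/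
def box {X : Type*} [TopologicalSpace X] (U : Set X) : Set (VSpace X) :=
  { C : VSpace X | C.1 ⊆ U }

/-- A clopen upset of `V(X)`. -/
def IsClopenUpsetV {X : Type*} [TopologicalSpace X] (A : Set (VSpace X)) : Prop :=
  IsClopen A ∧ IsUpperSet A

/-- `B` is the pseudocomplement of `A` in the Heyting algebra of clopen upsets of
`V(X)`: `B` is the largest clopen upset disjoint from `A`. -/
def IsPseudoComplV {X : Type*} [TopologicalSpace X] (A B : Set (VSpace X)) : Prop :=
  IsClopenUpsetV B ∧ B ∩ A = ∅ ∧
    ∀ W : Set (VSpace X), IsClopenUpsetV W → W ∩ A = ∅ → W ⊆ B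


lemma box_isClopen {X : Type*} [TopologicalSpace X] {U : Set X} (hU : IsClopen U) :
    IsClopen (box U) := by
  constructor
  · rw [← isOpen_compl_iff]
    have h : (box U)ᶜ = { C : VSpace X | (C.1 ∩ Uᶜ).Nonempty } := by
      ext C
      simp only [box, Set.mem_compl_iff, Set.mem_setOf_eq, Set.not_subset,
        Set.inter_compl_nonempty_iff]
    rw [h]
    exact TopologicalSpace.GenerateOpen.basic _ (Or.inr ⟨Uᶜ, hU.compl, rfl⟩)
  · exact TopologicalSpace.GenerateOpen.basic _ (Or.inl ⟨U, hU, rfl⟩)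

lemma pc_aux {X : Type*} [TopologicalSpace X] [T1Space X] {U : Set X} (hU : IsClopen U) :
    IsPseudoComplV (box U) (box Uᶜ) := by
  refine ⟨⟨box_isClopen hU.compl, fun a b hle ha => Set.Subset.trans hle ha⟩, ?_, ?_⟩
  · ext C
    simp only [Set.mem_inter_iff, box, Set.mem_setOf_eq, Set.mem_empty_iff_false, iff_false]
    rintro ⟨h1, h2⟩
    obtain ⟨x, hx⟩ := C.2.1
    exact h1 hx (h2 hx)
  · intro W hW hdisj C hC x hx
    by_contra hxU
    rw [Set.mem_compl_iff, not_not] at hxU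
    set D : VSpace X := ⟨{x}, ⟨x, rfl⟩, isClosed_singleton⟩ with hD
    have hCD : C ≤ D := by
      show ({x} : Set X) ⊆ C.1
      exact Set.singleton_subset_iff.mpr hx
    have hDW : D ∈ W := hW.2 hCD hC
    have hDU : D ∈ box U := Set.singleton_subset_iff.mpr hxU
    have : D ∈ W ∩ box U := ⟨hDW, hDU⟩
    rw [hdisj] at this
    exact this

/-- For a Stone space `X` (viewed as a Priestley space with the discrete order):
the maximal elements of `V(X)` are exactly the singletons; for every clopen `U`,
the pseudocomplement of `[U]` in `ClopUp(V(X))` is `[X \ U]`; and consequently each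
`[U]` is regular (the pseudocomplement of `[X \ U]` is `[U]`). -/
theorem vietoris_of_stone_max_and_pseudocomplement {X : Type*} [TopologicalSpace X]
    [CompactSpace X] [T2Space X] [TotallyDisconnectedSpace X] :
    (∀ C : VSpace X, (∀ D : VSpace X, C ≤ D → D = C) ↔ ∃ x : X, C.1 = {x}) ∧
    (∀ U : Set X, IsClopen U → IsPseudoComplV (box U) (box Uᶜ)) ∧
    (∀ U : Set X, IsClopen U → IsPseudoComplV (box Uᶜ) (box U)) := by
  refine ⟨?_, fun U hU => pc_aux hU, fun U hU => ?_⟩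
  · intro C
    constructor
    · intro hmax
      obtain ⟨x, hx⟩ := C.2.1
      refine ⟨x, ?_⟩
      have := hmax ⟨{x}, ⟨x, rfl⟩, isClosed_singleton⟩ (Set.singleton_subset_iff.mpr hx)
      exact (congrArg Subtype.val this).symm
    · rintro ⟨x, hx⟩ D hle
      apply Subtype.ext
      obtain ⟨y, hy⟩ := D.2.1
      have hyx : y = x := by
        have := hle hy; rw [hx] at this; exact this
      apply Set.Subset.antisymm hle
      rw [hx]
      intro z hz
      rw [Set.mem_singleton_iff] at hz
      subst hz; rw [← hyx] at *; exact hy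
  · have := pc_aux (X := X) hU.compl
    rwa [compl_compl] at this
end

section
/- Let X be a poset, Z an image-finite poset (every principal upset ↑z is finite), and p : Z → X a monotone map. Define P_r(X) as the poset of finite rooted subsets C ⊆ X (C ⊆ ↑r for some r ∈ C), ordered by reverse inclusion, with root map r : P_r(X) → X. Then h'(a) = p[↑a] defines the unique monotone r-open map h' : Z → P_r(X) with r ∘ h' = p. -/
open Set

/-- The poset `P_r(X)` of finite rooted subsets of a poset `X`: finite sets `C` with
`C ⊆ ↑r` for some `r ∈ C`. -/
def PrSet (X : Type*) [Preorder X] : Type _ :=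
  { C : Set X // C.Finite ∧ ∃ r ∈ C, C ⊆ Set.Ici r }

/-- `P_r(X)` is ordered by reverse inclusion: `C ⪯ D` iff `D ⊆ C`. -/
instance {X : Type*} [Preorder X] : PartialOrder (PrSet X) where
  le C D := D.1 ⊆ C.1
  le_refl C := subset_rfl
  le_trans a b c h1 h2 := Set.Subset.trans h2 h1
  le_antisymm a b h1 h2 := Subtype.ext (subset_antisymm h2 h1)

/-- The root map of `P_r(X)`. -/
noncomputable def rootP {X : Type*} [Preorder X] (C : PrSet X) : X :=
  C.2.2.choose

lemma rootP_mem {X : Type*} [Preorder X] (C : PrSet X) : rootP C ∈ C.1 :=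
  C.2.2.choose_spec.1

lemma subset_Ici_rootP {X : Type*} [Preorder X] (C : PrSet X) :
    C.1 ⊆ Set.Ici (rootP C) :=
  C.2.2.choose_spec.2

lemma rootP_eq {X : Type*} [PartialOrder X] (C : PrSet X) {r : X} (hr : r ∈ C.1)
    (hsub : C.1 ⊆ Set.Ici r) : rootP C = r :=
  le_antisymm (subset_Ici_rootP C hr) (hsub (rootP_mem C))

/-- For an image-finite poset `Z` and a monotone map `p : Z → X`, the assignment
`h'(a) = p[↑a]` defines the unique monotone `r`-open map `h' : Z → P_r(X)` with
`r ∘ h' = p`. -/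
theorem unique_lifting_to_PrSet {X Z : Type*} [PartialOrder X] [PartialOrder Z]
    (hZ : ∀ z : Z, (Set.Ici z).Finite) (p : Z → X) (hp : Monotone p) :
    ∃ h' : Z → PrSet X,
      (∀ a : Z, (h' a).1 = p '' Set.Ici a) ∧ Monotone h' ∧
      (∀ (a : Z) (D : PrSet X), h' a ≤ D → ∃ a', a ≤ a' ∧ rootP (h' a') = rootP D) ∧
      (∀ a : Z, rootP (h' a) = p a) ∧
      ∀ k : Z → PrSet X, Monotone k →
        (∀ (a : Z) (D : PrSet X), k a ≤ D → ∃ a', a ≤ a' ∧ rootP (k a') = rootP D) →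
        (∀ a : Z, rootP (k a) = p a) → k = h' := by
  set h' : Z → PrSet X := fun a => ⟨p '' Set.Ici a, (hZ a).image p, p a,
    ⟨a, le_refl a, rfl⟩, fun x ⟨z, hz, he⟩ => he ▸ hp hz⟩ with hh'
  have hroot' : ∀ a : Z, rootP (h' a) = p a := fun a =>
    rootP_eq (h' a) ⟨a, le_refl a, rfl⟩ (fun x ⟨z, hz, hz'⟩ => hz' ▸ hp hz)
  refine ⟨h', fun a => rfl, ?_, ?_, hroot', ?_⟩
  · intro a b hab
    exact Set.image_mono (f := p) (Set.Ici_subset_Ici.mpr hab)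
  · intro a D hD
    obtain ⟨a', ha', he⟩ := hD (rootP_mem D)
    exact ⟨a', ha', by rw [hroot' a', he]⟩
  · intro k hk hopen hroot
    funext a
    apply Subtype.ext
    apply Set.Subset.antisymm
    · rintro w hw
      -- w ∈ (k a).1 ; show w ∈ p '' Ici a
      have hwD : (k a).1 ∩ Set.Ici w ⊆ Set.Ici w := Set.inter_subset_right
      set D : PrSet X := ⟨(k a).1 ∩ Set.Ici w,
        (k a).2.1.subset Set.inter_subset_left, w, ⟨hw, le_refl w⟩, hwD⟩ with hDdef
      have hle : k a ≤ D := Set.inter_subset_left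
      obtain ⟨a', ha', he⟩ := hopen a D hle
      have hrD : rootP D = w := rootP_eq D ⟨hw, le_refl w⟩ hwD
      exact ⟨a', ha', by rw [← hroot a', he, hrD]⟩
    · rintro x ⟨z, hz, rfl⟩
      have : (k z).1 ⊆ (k a).1 := hk hz
      have := this (hroot z ▸ rootP_mem (k z))
      exact this
end
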